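/- arXiv:1610.05137 — 8 statements merged into one kernel-verified Lean document; each statement's English description precedes it below -/
import Mathlib

section
/- Let L be a finite join-semidistributive lattice whose canonical join complex is flag. Then the Möbius function of L takes only the values -1, 0, and 1: for all x ≤ y in L, μ(x, y) ∈ {-1, 0, 1}. -/
universe u v

def JoinSemidistrib (α : Type*) [Lattice α] : Prop :=
  ∀ x y z : α, x ⊔ y = x ⊔ z → x ⊔ (y ⊓ z) = x ⊔ y

def MeetSemidistrib (α : Type*) [Lattice α] : Prop :=
  ∀ x y z : α, x ⊓ y = x ⊓ z → x ⊓ (y ⊔ z) = x ⊓ y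

section JoinDefs

variable {α : Type*} [Lattice α] [OrderBot α]

/-- `j` is join-irreducible: not the bottom element, and `j = a ⊔ b` implies `j = a` or `j = b`. -/
def JoinIrred (j : α) : Prop :=
  j ≠ ⊥ ∧ ∀ a b : α, j = a ⊔ b → j = a ∨ j = b

/-- `A` join-refines `B`: every element of `A` is below some element of `B`. -/
def JoinRefines (A B : Finset α) : Prop :=
  ∀ a ∈ A, ∃ b ∈ B, a ≤ b

/-- `A` is an irredundant join representation of `w`. -/
def IrredJoinRep (A : Finset α) (w : α) : Prop :=
  A.sup id = w ∧ ∀ A' ⊂ A, A'.sup id < w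

/-- `A` is the canonical join representation of `w`: the irredundant join representation
of `w` that join-refines every irredundant join representation of `w`. -/
def CanonicalJoinRep (A : Finset α) (w : α) : Prop :=
  IrredJoinRep A w ∧ ∀ B : Finset α, IrredJoinRep B w → JoinRefines A B

/-- `A` joins canonically, i.e. `A` is a face of the canonical join complex. -/
def JoinsCanonically (A : Finset α) : Prop :=
  CanonicalJoinRep A (A.sup id)

/-- `j` is a canonical joinand of `w`. -/
def CanonicalJoinand (j w : α) : Prop :=
  ∃ A : Finset α, CanonicalJoinRep A w ∧ j ∈ A

end JoinDefs

/-- The canonical join complex is flag: any finite set of join-irreducible elements all of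
whose two-element subsets are faces is itself a face. -/
def FlagCanonicalJoinComplex (α : Type*) [Lattice α] [OrderBot α] [DecidableEq α] : Prop :=
  ∀ F : Finset α, (∀ j ∈ F, JoinIrred j) →
    (∀ j ∈ F, ∀ j' ∈ F, j ≠ j' → JoinsCanonically ({j, j'} : Finset α)) →
    JoinsCanonically F

/-- A lattice is crosscut-simplicial if for every `x ≤ y` and every proper subset `S` of the
set of atoms of the interval `[x, y]` (elements `a` with `x ⋖ a` and `a ≤ y`), the join of `x`
with all elements of `S` is strictly less than `y`. -/
def CrosscutSimplicial (β : Type*) [Lattice β] : Prop :=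
  ∀ x y : β, x ≤ y → ∀ S : Finset β,
    (∀ a ∈ S, x ⋖ a ∧ a ≤ y) →
    (∃ a : β, (x ⋖ a ∧ a ≤ y) ∧ a ∉ S) →
    S.fold (· ⊔ · : β → β → β) x id < y

section MeetDefs

variable {α : Type*} [Lattice α] [OrderTop α]

/-- `m` is meet-irreducible: not the top element, and `m = a ⊓ b` implies `m = a` or `m = b`. -/
def MeetIrred (m : α) : Prop :=
  m ≠ ⊤ ∧ ∀ a b : α, m = a ⊓ b → m = a ∨ m = b

/-- `A` meet-refines `B`: every element of `A` is above some element of `B`. -/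
def MeetRefines (A B : Finset α) : Prop :=
  ∀ a ∈ A, ∃ b ∈ B, b ≤ a

/-- `A` is an irredundant meet representation of `w`. -/
def IrredMeetRep (A : Finset α) (w : α) : Prop :=
  A.inf id = w ∧ ∀ A' ⊂ A, w < A'.inf id

/-- `A` is the canonical meet representation of `w`. -/
def CanonicalMeetRep (A : Finset α) (w : α) : Prop :=
  IrredMeetRep A w ∧ ∀ B : Finset α, IrredMeetRep B w → MeetRefines A B

/-- `A` meets canonically, i.e. `A` is a face of the canonical meet complex. -/
def MeetsCanonically (A : Finset α) : Prop :=
  CanonicalMeetRep A (A.inf id)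

end MeetDefs

/-- The canonical meet complex is flag. -/
def FlagCanonicalMeetComplex (α : Type*) [Lattice α] [OrderTop α] [DecidableEq α] : Prop :=
  ∀ F : Finset α, (∀ m ∈ F, MeetIrred m) →
    (∀ m ∈ F, ∀ m' ∈ F, m ≠ m' → MeetsCanonically ({m, m'} : Finset α)) →
    MeetsCanonically F


/-!
In a finite join-semidistributive lattice every cover `m ⋖ w` has a least `v` with `m ⊔ v = w`;
these elements form the canonical join representation of `w`, and a set `F` of join-irreducibles
joins canonically as soon as no `j ∈ F` lies below `⋁ (F \ {j}) ⊔ j_*`, where `j_*` is the lower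
cover of `j`. Flagness promotes this pairwise condition to: if `j ≤ ⋁ B` and `j_* ≤ b` for all
`b ∈ B`, then `j ≤ b` for some `b ∈ B`. Applied to the least `j` with `x ⊔ j = c` for an atom `c`
of `[x, y]`, this shows that `x` joined with a proper subset of the atoms of `[x, y]` stays below
`y`. By the crosscut theorem, `μ(x, y)` is then `(-1) ^ k` if `y` is the join of the `k` atoms of
`[x, y]`, and `0` otherwise.
-/

open Finset

open scoped Classical

section JoinRepresentations

variable {α : Type*} [Lattice α] [OrderBot α]

lemma JoinIrred.supIrred {j : α} (hj : JoinIrred j) : SupIrred j :=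
  ⟨fun h => hj.1 h.eq_bot, fun b c h => (hj.2 b c h.symm).imp Eq.symm Eq.symm⟩

lemma sup_sup_erase [DecidableEq α] {F : Finset α} {j : α} (hj : j ∈ F) :
    j ⊔ (F.erase j).sup id = F.sup id := by
  conv_rhs => rw [← insert_erase hj, sup_insert]
  rfl

lemma IrredJoinRep.eq_of_le {F : Finset α} {w a b : α} (hF : IrredJoinRep F w) (ha : a ∈ F)
    (hb : b ∈ F) (hab : a ≤ b) : a = b := by
  by_contra hne
  refine (hF.2 _ (erase_ssubset ha)).ne (le_antisymm (hF.1 ▸ sup_mono (erase_subset a F)) ?_)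
  refine hF.1 ▸ Finset.sup_le fun c hc => ?_
  rcases eq_or_ne c a with rfl | hca
  · exact hab.trans (le_sup (f := id) (mem_erase.2 ⟨Ne.symm hne, hb⟩))
  · exact le_sup (f := id) (mem_erase.2 ⟨hca, hc⟩)

lemma CanonicalJoinRep.subset {F G : Finset α} {w : α} (hF : CanonicalJoinRep F w)
    (hG : CanonicalJoinRep G w) : F ⊆ G := by
  intro f hf
  obtain ⟨g, hg, hfg⟩ := hF.2 G hG.1 f hf
  obtain ⟨f', hf', hgf'⟩ := hG.2 F hF.1 g hg
  obtain rfl := hF.1.eq_of_le hf hf' (hfg.trans hgf')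
  rwa [hfg.antisymm hgf']

end JoinRepresentations

section MinJoinand

variable {α : Type*} [Lattice α] [Fintype α]

noncomputable def minJoinand (m w : α) : α :=
  if h : (univ.filter (fun v => m ⊔ v = w)).Nonempty then
    (univ.filter (fun v => m ⊔ v = w)).inf' h id
  else w

lemma minJoinand_le {m w v : α} (h : m ⊔ v = w) : minJoinand m w ≤ v := by
  rw [minJoinand, dif_pos ⟨v, by simp [h]⟩]
  exact inf'_le _ (by simp [h])

lemma sup_minJoinand (hjsd : JoinSemidistrib α) {m w : α} (h : m ≤ w) :
    m ⊔ minJoinand m w = w := by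
  have hne : (univ.filter (fun v => m ⊔ v = w)).Nonempty := ⟨w, by simp [h]⟩
  rw [minJoinand, dif_pos hne]
  refine inf'_mem {v | m ⊔ v = w} (fun a ha b hb => ?_) _ hne id fun v hv => (mem_filter.1 hv).2
  simp only [Set.mem_ofPred_eq] at ha hb ⊢
  rw [hjsd m a b (ha.trans hb.symm), ha]

lemma minJoinand_le_right (hjsd : JoinSemidistrib α) {m w : α} (h : m ≤ w) :
    minJoinand m w ≤ w :=
  le_sup_right.trans (sup_minJoinand hjsd h).le

namespace CovBy

variable {m m' w b : α}

lemma le_or_minJoinand_le (h : m ⋖ w) (hb : b ≤ w) : b ≤ m ∨ minJoinand m w ≤ b :=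
  (h.eq_or_eq le_sup_left (sup_le h.le hb)).imp sup_eq_left.1 minJoinand_le

lemma minJoinand_not_le (hjsd : JoinSemidistrib α) (h : m ⋖ w) : ¬ minJoinand m w ≤ m :=
  fun hle => h.lt.ne ((sup_eq_left.2 hle).symm.trans (sup_minJoinand hjsd h.le))

lemma minJoinand_le_of_ne (hm : m ⋖ w) (hm' : m' ⋖ w) (hne : m ≠ m') : minJoinand m' w ≤ m :=
  minJoinand_le (hm'.wcovBy.sup_eq hm.wcovBy hne.symm)

lemma minJoinand_not_le_of_covBy (hjsd : JoinSemidistrib α) (hm : m ⋖ w) (hb : m ⋖ b)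
    (hne : w ≠ b) : ¬ minJoinand m w ≤ b := fun hle =>
  hne ((hb.eq_or_eq hm.le (sup_minJoinand hjsd hm.le ▸ sup_le hb.le hle)).resolve_left hm.ne')

end CovBy

noncomputable def canonicalJoinands (w : α) : Finset α :=
  (univ.filter (· ⋖ w)).image (minJoinand · w)

lemma mem_canonicalJoinands {g w : α} :
    g ∈ canonicalJoinands w ↔ ∃ m, m ⋖ w ∧ minJoinand m w = g := by
  simp [canonicalJoinands]

lemma le_of_mem_canonicalJoinands (hjsd : JoinSemidistrib α) {g w : α}
    (hg : g ∈ canonicalJoinands w) : g ≤ w := by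
  obtain ⟨m, hm, rfl⟩ := mem_canonicalJoinands.1 hg
  exact minJoinand_le_right hjsd hm.le

lemma CovBy.le_of_mem_canonicalJoinands {m w g : α} (hm : m ⋖ w) (hg : g ∈ canonicalJoinands w)
    (hne : g ≠ minJoinand m w) : g ≤ m := by
  obtain ⟨m', hm', rfl⟩ := mem_canonicalJoinands.1 hg
  exact hm.minJoinand_le_of_ne hm' (by rintro rfl; exact hne rfl)

end MinJoinand

section CanonicalJoinands

variable {α : Type*} [Lattice α] [OrderBot α] [Fintype α]

noncomputable def lowerCover (j : α) : α :=
  (univ.filter (· < j)).sup id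

lemma le_lowerCover {v j : α} (h : v < j) : v ≤ lowerCover j :=
  le_sup (f := id) (by simpa using h)

lemma JoinIrred.lowerCover_lt {j : α} (hj : JoinIrred j) : lowerCover j < j := by
  refine lt_of_le_of_ne (Finset.sup_le fun v hv => (mem_filter.1 hv).2.le) fun h => ?_
  obtain ⟨v, hv, hvj⟩ := hj.supIrred.finset_sup_eq h
  exact (mem_filter.1 hv).2.ne hvj

namespace CovBy

variable {m w v : α}

lemma joinIrred_minJoinand (hjsd : JoinSemidistrib α) (h : m ⋖ w) :
    JoinIrred (minJoinand m w) := by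
  refine ⟨fun h0 => h.minJoinand_not_le hjsd (h0 ▸ bot_le), fun a b hab => ?_⟩
  have hw := minJoinand_le_right hjsd h.le
  have ha : a ≤ minJoinand m w := hab ▸ le_sup_left
  have hb : b ≤ minJoinand m w := hab ▸ le_sup_right
  rcases h.le_or_minJoinand_le (ha.trans hw) with ham | hma
  · rcases h.le_or_minJoinand_le (hb.trans hw) with hbm | hmb
    · exact absurd (hab.le.trans (sup_le ham hbm)) (h.minJoinand_not_le hjsd)
    · exact Or.inr (hmb.antisymm hb)
  · exact Or.inl (hma.antisymm ha)

lemma lowerCover_minJoinand_le (hjsd : JoinSemidistrib α) (h : m ⋖ w) :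
    lowerCover (minJoinand m w) ≤ m :=
  have hlt := (h.joinIrred_minJoinand hjsd).lowerCover_lt
  (h.le_or_minJoinand_le (hlt.le.trans (minJoinand_le_right hjsd h.le))).resolve_right hlt.not_ge

lemma minJoinand_not_le_sup_lowerCover (hjsd : JoinSemidistrib α) (h : m ⋖ w) (hv : v ≤ w)
    (hnle : ¬ minJoinand m w ≤ v) : ¬ minJoinand m w ≤ v ⊔ lowerCover (minJoinand m w) :=
  fun hle => h.minJoinand_not_le hjsd <| hle.trans <|
    sup_le ((h.le_or_minJoinand_le hv).resolve_right hnle) (h.lowerCover_minJoinand_le hjsd)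

end CovBy

lemma sup_canonicalJoinands (hjsd : JoinSemidistrib α) (w : α) :
    (canonicalJoinands w).sup id = w := by
  have hle : (canonicalJoinands w).sup id ≤ w :=
    Finset.sup_le fun g hg => le_of_mem_canonicalJoinands hjsd hg
  refine hle.eq_of_not_lt fun hlt => ?_
  obtain ⟨m, hsm, hm⟩ := exists_le_covBy_of_lt hlt
  have hmem : minJoinand m w ∈ canonicalJoinands w := mem_canonicalJoinands.2 ⟨m, hm, rfl⟩
  exact hm.minJoinand_not_le hjsd ((le_sup (f := id) hmem).trans hsm)

lemma canonicalJoinands_refines {B : Finset α} {w : α} (hB : B.sup id = w) :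
    JoinRefines (canonicalJoinands w) B := by
  intro g hg
  obtain ⟨m, hm, rfl⟩ := mem_canonicalJoinands.1 hg
  by_contra! hnle
  refine hm.lt.not_ge (hB ▸ Finset.sup_le fun b hb => ?_)
  exact (hm.le_or_minJoinand_le (hB ▸ le_sup (f := id) hb)).resolve_right (hnle b hb)

lemma eq_canonicalJoinands_of_subset {A : Finset α} {w : α} (hA : A ⊆ canonicalJoinands w)
    (hsup : A.sup id = w) : A = canonicalJoinands w := by
  refine hA.antisymm fun g hg => ?_
  by_contra hgA
  obtain ⟨m, hm, rfl⟩ := mem_canonicalJoinands.1 hg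
  refine hm.lt.not_ge (hsup ▸ Finset.sup_le fun a ha => ?_)
  exact hm.le_of_mem_canonicalJoinands (hA ha) (by rintro rfl; exact hgA ha)

lemma canonicalJoinRep_canonicalJoinands (hjsd : JoinSemidistrib α) (w : α) :
    CanonicalJoinRep (canonicalJoinands w) w := by
  refine ⟨⟨sup_canonicalJoinands hjsd w, fun A hA => ?_⟩,
    fun B hB => canonicalJoinands_refines hB.1⟩
  refine (Finset.sup_le fun a ha => le_of_mem_canonicalJoinands hjsd (hA.subset ha)).lt_of_ne
    fun hsup => hA.ne (eq_canonicalJoinands_of_subset hA.subset hsup)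

lemma JoinsCanonically.eq_canonicalJoinands (hjsd : JoinSemidistrib α) {F : Finset α}
    (hF : JoinsCanonically F) : F = canonicalJoinands (F.sup id) :=
  eq_canonicalJoinands_of_subset (hF.subset (canonicalJoinRep_canonicalJoinands hjsd _)) rfl

lemma joinsCanonically_of_forall_not_le [DecidableEq α] (hjsd : JoinSemidistrib α)
    {F : Finset α} (hF : ∀ j ∈ F, JoinIrred j)
    (hcrit : ∀ j ∈ F, ¬ j ≤ (F.erase j).sup id ⊔ lowerCover j) : JoinsCanonically F := by
  rw [JoinsCanonically]
  generalize hw : F.sup id = w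
  suffices hsub : F ⊆ canonicalJoinands w by
    rw [eq_canonicalJoinands_of_subset hsub hw]
    exact canonicalJoinRep_canonicalJoinands hjsd w
  intro j hj
  have hjw : j ≤ w := hw ▸ le_sup (f := id) hj
  have hsw : (F.erase j).sup id ⊔ lowerCover j < w := by
    refine (sup_le ?_ ((hF j hj).lowerCover_lt.le.trans hjw)).lt_of_ne fun h => hcrit j hj (h ▸ hjw)
    exact hw ▸ sup_mono (erase_subset j F)
  obtain ⟨m, hsm, hm⟩ := exists_le_covBy_of_lt hsw
  have hmj : m ⊔ j = w := by
    refine le_antisymm (sup_le hm.le hjw) ?_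
    rw [← hw, ← sup_sup_erase hj]
    exact sup_le le_sup_right ((le_sup_left.trans hsm).trans le_sup_left)
  rcases (minJoinand_le hmj).lt_or_eq with hlt | heq
  · exact absurd ((le_lowerCover hlt).trans (le_sup_right.trans hsm)) (hm.minJoinand_not_le hjsd)
  · exact mem_canonicalJoinands.2 ⟨m, hm, heq⟩

lemma joinsCanonically_pair [DecidableEq α] (hjsd : JoinSemidistrib α) {j j' : α}
    (hne : j ≠ j') (hj : JoinIrred j) (hj' : JoinIrred j') (h : ¬ j ≤ j' ⊔ lowerCover j)
    (h' : ¬ j' ≤ j ⊔ lowerCover j') : JoinsCanonically ({j, j'} : Finset α) := by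
  refine joinsCanonically_of_forall_not_le hjsd (by simp [hj, hj']) ?_
  simp [erase_insert_of_ne, hne, h, h']

end CanonicalJoinands

section Flag

variable {α : Type*} [Lattice α] [OrderBot α] [Fintype α] [DecidableEq α]

lemma joinsCanonically_insert_filter_canonicalJoinands (hjsd : JoinSemidistrib α)
    (hflag : FlagCanonicalJoinComplex α) {j y : α} (hj : JoinIrred j) (hjy : j ≤ y)
    (hjΓ : ∀ g ∈ canonicalJoinands y, ¬ j ≤ g ⊔ lowerCover j) :
    JoinsCanonically (insert j ((canonicalJoinands y).filter (¬ · ≤ j))) := by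
  set W := insert j ((canonicalJoinands y).filter (¬ · ≤ j))
  have hWy : ∀ b ∈ W, b ≤ y := by
    simp only [W, forall_mem_insert, mem_filter]
    exact ⟨hjy, fun g hg => le_of_mem_canonicalJoinands hjsd hg.1⟩
  have hcrit : ∀ a ∈ W, ∀ b ∈ W, a ≠ b → ¬ a ≤ b ⊔ lowerCover a := by
    intro a ha b hb hab
    rcases mem_insert.1 ha with rfl | ha
    · rcases mem_insert.1 hb with rfl | hb
      · exact absurd rfl hab
      · exact hjΓ b (mem_filter.1 hb).1
    obtain ⟨haΓ, haj⟩ := mem_filter.1 ha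
    obtain ⟨m, hm, rfl⟩ := mem_canonicalJoinands.1 haΓ
    refine hm.minJoinand_not_le_sup_lowerCover hjsd (hWy b hb) fun hle => ?_
    rcases mem_insert.1 hb with rfl | hb
    · exact haj hle
    · exact hm.minJoinand_not_le hjsd <| hle.trans <|
        hm.le_of_mem_canonicalJoinands (mem_filter.1 hb).1 (Ne.symm hab)
  have hirr : ∀ a ∈ W, JoinIrred a := by
    simp only [W, forall_mem_insert, mem_filter]
    refine ⟨hj, fun g hg => ?_⟩
    obtain ⟨m, hm, rfl⟩ := mem_canonicalJoinands.1 hg.1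
    exact hm.joinIrred_minJoinand hjsd
  exact hflag W hirr fun a ha b hb hab => joinsCanonically_pair hjsd hab (hirr a ha) (hirr b hb)
    (hcrit a ha b hb hab) (hcrit b hb a ha hab.symm)

theorem JoinIrred.exists_le_of_le_sup (hjsd : JoinSemidistrib α)
    (hflag : FlagCanonicalJoinComplex α) {j : α} (hj : JoinIrred j) {B : Finset α}
    (hB : ∀ b ∈ B, lowerCover j ≤ b) (hjB : j ≤ B.sup id) : ∃ b ∈ B, j ≤ b := by
  by_contra! hnle
  set y := B.sup id
  have hjΓ : ∀ g ∈ canonicalJoinands y, ¬ j ≤ g ⊔ lowerCover j := fun g hg hle => by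
    obtain ⟨b, hb, hgb⟩ := canonicalJoinands_refines rfl g hg
    exact hnle b hb (hle.trans (sup_le hgb (hB b hb)))
  -- `j` is the least joinand of a cover `m ⋖ ⋁ W`, and all canonical joinands of `y` lie below `m`.
  have hW := (joinsCanonically_insert_filter_canonicalJoinands hjsd hflag hj hjB hjΓ)
    |>.eq_canonicalJoinands hjsd
  obtain ⟨m, hm, hmj⟩ := mem_canonicalJoinands.1 (hW ▸ mem_insert_self _ _)
  refine hm.minJoinand_not_le hjsd (hmj.le.trans (hjB.trans ?_))
  refine sup_canonicalJoinands hjsd y ▸ Finset.sup_le fun g hg => ?_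
  by_cases hgj : g ≤ j
  · have hgj : g < j := hgj.lt_of_ne fun h => hjΓ g hg (h ▸ le_sup_left)
    refine (le_lowerCover hgj).trans ?_
    rw [← hmj]
    exact hm.lowerCover_minJoinand_le hjsd
  · refine hm.le_of_mem_canonicalJoinands (hW ▸ ?_) ?_
    · exact mem_insert_of_mem (mem_filter.2 ⟨hg, hgj⟩)
    · rintro rfl; exact hgj hmj.le

end Flag

section Crosscut

variable {α : Type*} [Lattice α] [OrderBot α]

lemma fold_sup_eq_sup_sup (s : Finset α) (x : α) :
    s.fold (· ⊔ · : α → α → α) x id = x ⊔ s.sup id := by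
  induction s using Finset.cons_induction with
  | empty => simp
  | cons a s ha ih => rw [fold_cons, ih, sup_cons, sup_left_comm]

variable [Fintype α]

theorem crosscutSimplicial_of_flag [DecidableEq α] (hjsd : JoinSemidistrib α)
    (hflag : FlagCanonicalJoinComplex α) : CrosscutSimplicial α := by
  rintro x y hxy S hS ⟨c, ⟨hxc, hcy⟩, hcS⟩
  rw [fold_sup_eq_sup_sup]
  refine (sup_le hxy (Finset.sup_le fun a ha => (hS a ha).2)).lt_of_ne fun hy => ?_
  have hjB : minJoinand x c ≤ (insert x S).sup id := by
    rw [sup_insert]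
    exact (minJoinand_le_right hjsd hxc.le).trans (hcy.trans_eq hy.symm)
  have hxB : ∀ b ∈ insert x S, x ≤ b := by simpa using fun a ha => (hS a ha).1.le
  obtain ⟨b, hb, hjb⟩ := (hxc.joinIrred_minJoinand hjsd).exists_le_of_le_sup hjsd hflag
    (fun b hb => (hxc.lowerCover_minJoinand_le hjsd).trans (hxB b hb)) hjB
  rcases mem_insert.1 hb with rfl | hbS
  · exact hxc.minJoinand_not_le hjsd hjb
  · exact hxc.minJoinand_not_le_of_covBy hjsd (hS b hbS).1 (by rintro rfl; exact hcS hbS) hjb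

end Crosscut

section Moebius

variable {β : Type*} [PartialOrder β] [Fintype β]

def IsMoebiusFunction (μ : β → β → ℤ) : Prop :=
  (∀ x, μ x x = 1) ∧ ∀ x y, x < y → ∑ z ∈ univ.filter (fun z => x ≤ z ∧ z ≤ y), μ x z = 0

lemma IsMoebiusFunction.eq {μ ν : β → β → ℤ} (hμ : IsMoebiusFunction μ)
    (hν : IsMoebiusFunction ν) {x y : β} (hxy : x ≤ y) : μ x y = ν x y := by
  induction y using WellFoundedLT.induction with
  | _ y ih =>
    rcases hxy.eq_or_lt with rfl | hlt
    · rw [hμ.1, hν.1]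
    have hy : y ∈ univ.filter (fun z => x ≤ z ∧ z ≤ y) := by simp [hxy]
    have hμy := hμ.2 x y hlt
    have hνy := hν.2 x y hlt
    rw [← add_sum_erase _ _ hy] at hμy hνy
    rw [sum_congr rfl fun z hz => ?_] at hμy
    · linarith
    obtain ⟨hzy, hxz, hzy'⟩ := by simpa using hz
    exact ih z (hzy'.lt_of_ne hzy) hxz

noncomputable def intervalAtoms (x y : β) : Finset β :=
  univ.filter (fun a => x ⋖ a ∧ a ≤ y)

lemma mem_intervalAtoms {x y a : β} : a ∈ intervalAtoms x y ↔ x ⋖ a ∧ a ≤ y := by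
  simp [intervalAtoms]

lemma intervalAtoms_mono {x y z : β} (h : z ≤ y) : intervalAtoms x z ⊆ intervalAtoms x y :=
  fun _ ha => mem_intervalAtoms.2 ((mem_intervalAtoms.1 ha).imp_right (·.trans h))

lemma intervalAtoms_nonempty {x y : β} (h : x < y) : (intervalAtoms x y).Nonempty :=
  let ⟨a, hxa, hay⟩ := exists_covBy_le_of_lt h
  ⟨a, mem_intervalAtoms.2 ⟨hxa, hay⟩⟩

lemma intervalAtoms_self (x : β) : intervalAtoms x x = ∅ :=
  eq_empty_of_forall_notMem fun _ ha =>
    (mem_intervalAtoms.1 ha).1.lt.not_ge (mem_intervalAtoms.1 ha).2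

end Moebius

section CrosscutMoebius

variable {α : Type*} [Lattice α] [OrderBot α] [Fintype α]

noncomputable def crosscutMoebius (x y : α) : ℤ :=
  if x ⊔ (intervalAtoms x y).sup id = y then (-1) ^ #(intervalAtoms x y) else 0

lemma CrosscutSimplicial.intervalAtoms_sup (hcs : CrosscutSimplicial α) {x y : α}
    {s : Finset α} (hs : s ⊆ intervalAtoms x y) : intervalAtoms x (x ⊔ s.sup id) = s := by
  have hle : ∀ a ∈ s, a ≤ x ⊔ s.sup id := fun a ha => (le_sup (f := id) ha).trans le_sup_right
  refine Subset.antisymm (fun a ha => ?_) fun a ha =>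
    mem_intervalAtoms.2 ⟨(mem_intervalAtoms.1 (hs ha)).1, hle a ha⟩
  by_contra has
  have hlt := hcs x _ le_sup_left s (fun b hb => ⟨(mem_intervalAtoms.1 (hs hb)).1, hle b hb⟩)
    ⟨a, mem_intervalAtoms.1 ha, has⟩
  rw [fold_sup_eq_sup_sup] at hlt
  exact hlt.false

lemma CrosscutSimplicial.isMoebiusFunction_crosscutMoebius (hcs : CrosscutSimplicial α) :
    IsMoebiusFunction (crosscutMoebius (α := α)) := by
  refine ⟨fun x => by simp [crosscutMoebius, intervalAtoms_self], fun x y hxy => ?_⟩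
  simp only [crosscutMoebius]
  rw [← sum_filter, ← sum_powerset_neg_one_pow_card_of_nonempty (intervalAtoms_nonempty hxy)]
  refine sum_nbij' (intervalAtoms x) (x ⊔ ·.sup id) ?_ ?_ ?_ ?_ fun _ _ => rfl
  · intro z hz
    exact mem_powerset.2 (intervalAtoms_mono (mem_filter.1 (mem_filter.1 hz).1).2.2)
  · intro s hs
    have hs := mem_powerset.1 hs
    have hsy : x ⊔ s.sup id ≤ y :=
      sup_le hxy.le (Finset.sup_le fun a ha => (mem_intervalAtoms.1 (hs ha)).2)
    simpa [hcs.intervalAtoms_sup hs] using hsy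
  · exact fun z hz => (mem_filter.1 hz).2
  · exact fun s hs => hcs.intervalAtoms_sup (mem_powerset.1 hs)

lemma crosscutMoebius_mem (x y : α) : crosscutMoebius x y ∈ ({-1, 0, 1} : Set ℤ) := by
  unfold crosscutMoebius
  split_ifs
  · rcases neg_one_pow_eq_or ℤ #(intervalAtoms x y) with h | h <;> simp [h]
  · simp

end CrosscutMoebius

open scoped Classical in
/-- Corollary (topology): if the canonical join complex of a finite join-semidistributive
lattice is flag, then the Möbius function takes only the values -1, 0, 1. -/
theorem stmt_2 {α : Type*} [Lattice α] [OrderBot α] [Fintype α] [DecidableEq α]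
    (hjsd : JoinSemidistrib α) (hflag : FlagCanonicalJoinComplex α)
    (μ : α → α → ℤ) (hrefl : ∀ x : α, μ x x = 1)
    (hrec : ∀ x y : α, x < y →
      ∑ z ∈ Finset.univ.filter (fun z : α => x ≤ z ∧ z ≤ y), μ x z = 0) :
    ∀ x y : α, x ≤ y → μ x y ∈ ({-1, 0, 1} : Set ℤ) := by
  intro x y hxy
  have hcs := crosscutSimplicial_of_flag hjsd hflag
  rw [IsMoebiusFunction.eq ⟨hrefl, hrec⟩ hcs.isMoebiusFunction_crosscutMoebius hxy]
  exact crosscutMoebius_mem x y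
end

section
/- Let L be a finite join-semidistributive lattice that is crosscut-simplicial. Then every sublattice of L (a subset closed under the join and meet of L, with the induced order) is crosscut-simplicial, and for every surjective lattice homomorphism φ from L onto a lattice L' (a map preserving binary joins and binary meets), the lattice L' is crosscut-simplicial. -/
universe u v

/-!
Meet-semidistributivity passes to sublattices and to lattice quotients (the greatest elements
of the fibres of a surjective lattice homomorphism form a meet-preserving section), and it
implies crosscut-simpliciality, because an atom of `[x, y]` meets every join of other atoms of
`[x, y]` in `x`. So it suffices to show that a finite join-semidistributive crosscut-simplicial
lattice is meet-semidistributive.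

A failure of meet-semidistributivity yields an obstruction `m ⋖ a`, `a ⊓ u = a ⊓ v = m`,
`a ≤ u ⊔ v`; take one for which the interval `[m, w]`, `w = u ⊔ v`, is minimal. The elements
`t ≤ w` with `a ⊓ t = m` are then closed under joins below `w`, so two distinct maximal ones
join to `w`. By crosscut-simpliciality one maximal such element `T` lies above all atoms of
`[m, w]` other than `a`; for another one `y`, the atoms below `y` lie below `T`, so
`p := y ⊓ T > m`. If `z` is maximal and `r ≤ a ⊔ z` is another such element with `r ≰ z`, then
`z ⊔ r = w = z ⊔ a`, and join-semidistributivity gives `z = z ⊔ (a ⊓ r) = w`, which is absurd.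
Hence `(a ⊔ p) ⊓ y = (a ⊔ p) ⊓ T = p`, while `a ⊔ p ≤ y ⊔ T = w`: an obstruction in the smaller
interval `[p, w]`.
-/

open OrderDual

variable {α β : Type*} [Lattice α] [Lattice β]

theorem inf_eq_of_covBy_of_ne {x a c : α} (ha : x ⋖ a) (hc : x ⋖ c) (hac : a ≠ c) :
    a ⊓ c = x := by
  refine (ha.eq_or_eq (le_inf ha.le hc.le) inf_le_left).resolve_right fun h => hac ?_
  exact ((hc.eq_or_eq ha.le (inf_eq_left.1 h)).resolve_left ha.lt.ne')

theorem Finset.fold_sup_le_iff {ι : Type*} {s : Finset ι} {f : ι → α} {b c : α} :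
    s.fold (· ⊔ · : α → α → α) b f ≤ c ↔ b ≤ c ∧ ∀ i ∈ s, f i ≤ c :=
  Finset.fold_op_rel_iff_and (r := fun c x => x ≤ c) sup_le_iff

theorem MeetSemidistrib.crosscutSimplicial (h : MeetSemidistrib α) : CrosscutSimplicial α := by
  rintro x y hxy S hS ⟨a, ⟨hxa, hay⟩, haS⟩
  have hmeet : a ⊓ S.fold (· ⊔ ·) x id = x := by
    induction S using Finset.cons_induction with
    | empty => exact inf_eq_right.2 hxa.le
    | cons c S hcS ih =>
      have hac : a ⊓ c = x :=
        inf_eq_of_covBy_of_ne hxa (hS c (Finset.mem_cons_self c S)).1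
          fun hac => haS (hac ▸ Finset.mem_cons_self c S)
      have hS' : a ⊓ S.fold (· ⊔ ·) x id = x :=
        ih (fun b hb => hS b (Finset.mem_cons_of_mem hb)) fun ha => haS (Finset.mem_cons_of_mem ha)
      rw [Finset.fold_cons]
      exact (h a c _ (hac.trans hS'.symm)).trans hac
  have hle : S.fold (· ⊔ · : α → α → α) x id ≤ y :=
    (Finset.fold_sup_le_iff (f := id)).2 ⟨hxy, fun c hc => (hS c hc).2⟩
  refine hle.lt_of_ne fun hy => ?_
  rw [hy, inf_eq_left.2 hay] at hmeet
  exact hxa.lt.ne' hmeet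

theorem MeetSemidistrib.of_injective (h : MeetSemidistrib α) (f : LatticeHom β α)
    (hf : Function.Injective f) : MeetSemidistrib β := by
  intro x y z hyz
  apply hf
  simpa only [map_inf, map_sup] using h (f x) (f y) (f z) (by simp only [← map_inf, hyz])

theorem LatticeHom.exists_isGreatest_fiber [Finite α] (f : LatticeHom α β) {b : β}
    (hb : b ∈ Set.range f) : ∃ s, IsGreatest (f ⁻¹' {b}) s := by
  obtain ⟨x, hx⟩ := hb
  obtain ⟨s, -, hs⟩ := Finite.exists_le_maximal (p := (· ∈ f ⁻¹' {b})) hx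
  have hsb : f s = b := hs.prop
  refine ⟨s, hsb, fun y hy => le_sup_left.trans (hs.le_of_ge ?_ le_sup_right)⟩
  simp_all only [Set.mem_preimage, Set.mem_singleton_iff, map_sup, sup_idem]

theorem MeetSemidistrib.of_surjective [Finite α] (h : MeetSemidistrib α) (f : LatticeHom α β)
    (hf : Function.Surjective f) : MeetSemidistrib β := by
  choose σ hσ using fun b => f.exists_isGreatest_fiber (hf b)
  have hfσ (b : β) : f (σ b) = b := (hσ b).1
  have hσ_inf (b c : β) : σ b ⊓ σ c = σ (b ⊓ c) := by
    refine le_antisymm ((hσ _).2 (by simp [hfσ])) (le_inf ?_ ?_)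
    · exact le_sup_left.trans ((hσ b).2 (by simp [hfσ] : σ (b ⊓ c) ⊔ σ b ∈ _))
    · exact le_sup_left.trans ((hσ c).2 (by simp [hfσ] : σ (b ⊓ c) ⊔ σ c ∈ _))
  intro x y z hyz
  have := congrArg f (h (σ x) (σ y) (σ z) (by rw [hσ_inf, hσ_inf, hyz]))
  simpa only [map_inf, map_sup, hfσ] using this

def MeetObstruction (m a u v : α) : Prop :=
  m ⋖ a ∧ a ⊓ u = m ∧ a ⊓ v = m ∧ a ≤ u ⊔ v

theorem inf_sup_eq_of_forall_not_meetObstruction [Finite α] {b x y z : α}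
    (h : ∀ c, ¬ MeetObstruction b c y z) (hy : x ⊓ y = b) (hz : x ⊓ z = b) :
    x ⊓ (y ⊔ z) = b := by
  have hb : b ≤ x ⊓ (y ⊔ z) := hy ▸ inf_le_inf_left x le_sup_left
  by_contra hne
  obtain ⟨c, hbc, hc⟩ := exists_covBy_le_of_lt (hb.lt_of_ne' hne)
  have inf_eq {t : α} (ht : x ⊓ t = b) : c ⊓ t = b :=
    le_antisymm (ht ▸ inf_le_inf_right t (hc.trans inf_le_left)) (le_inf hbc.le (ht ▸ inf_le_right))
  exact h c ⟨hbc, inf_eq hy, inf_eq hz, hc.trans inf_le_right⟩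

theorem MeetSemidistrib.of_forall_not_meetObstruction [Finite α]
    (h : ∀ m a u v : α, ¬ MeetObstruction m a u v) : MeetSemidistrib α :=
  fun x y z hyz =>
    inf_sup_eq_of_forall_not_meetObstruction (fun c => h (x ⊓ y) c y z) rfl hyz.symm

/-- No obstruction `(m', a', u', v')` has its interval `[m', u' ⊔ v']` strictly inside `[m, w]`:
this is what `(toDual m', u' ⊔ v') < (toDual m, w)` says. -/
def NoObstructionBelow (m w : α) : Prop :=
  ∀ m' a' u' v' : α, (toDual m', u' ⊔ v') < (toDual m, w) → ¬ MeetObstruction m' a' u' v'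

def avoiders (m a w : α) : Set α :=
  {t | t ≤ w ∧ a ⊓ t = m}

section Avoiders

variable {m a w r t y z : α}

theorem le_of_mem_avoiders (ht : t ∈ avoiders m a w) : m ≤ t :=
  ht.2 ▸ inf_le_right

theorem mem_avoiders_of_le (ht : t ∈ avoiders m a w) (hmr : m ≤ r) (hrt : r ≤ t) :
    r ∈ avoiders m a w :=
  ⟨hrt.trans ht.1, le_antisymm (ht.2 ▸ inf_le_inf_left a hrt) (le_inf (ht.2 ▸ inf_le_left) hmr)⟩

theorem not_le_of_mem_avoiders (hma : m < a) (ht : t ∈ avoiders m a w) : ¬ a ≤ t :=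
  fun hat => hma.ne' (by rw [← ht.2, inf_eq_left.2 hat])

variable [Finite α]

theorem sup_mem_avoiders (hmin : NoObstructionBelow m w) (hy : y ∈ avoiders m a w)
    (hz : z ∈ avoiders m a w) (hyz : y ⊔ z < w) : y ⊔ z ∈ avoiders m a w :=
  ⟨hyz.le, inf_sup_eq_of_forall_not_meetObstruction
    (fun c => hmin m c y z (Prod.mk_lt_mk_iff_right.2 hyz)) hy.2 hz.2⟩

theorem fold_mem_avoiders (hmin : NoObstructionBelow m w) (hma : m ≤ a) {s : Finset α}
    (hs : ∀ c ∈ s, c ∈ avoiders m a w) (hlt : s.fold (· ⊔ · : α → α → α) m id < w) :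
    s.fold (· ⊔ · : α → α → α) m id ∈ avoiders m a w := by
  induction s using Finset.cons_induction with
  | empty => exact ⟨hlt.le, inf_eq_right.2 hma⟩
  | cons c s hcs ih =>
    rw [Finset.fold_cons] at hlt ⊢
    exact sup_mem_avoiders hmin (hs c (Finset.mem_cons_self c s))
      (ih (fun b hb => hs b (Finset.mem_cons_of_mem hb)) (le_sup_right.trans_lt hlt)) hlt

theorem sup_eq_of_maximal_avoiders (hmin : NoObstructionBelow m w)
    (hz : Maximal (· ∈ avoiders m a w) z) (ht : t ∈ avoiders m a w) (htz : ¬ t ≤ z) :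
    z ⊔ t = w := by
  by_contra hne
  have hzt := sup_mem_avoiders hmin hz.prop ht ((sup_le hz.prop.1 ht.1).lt_of_ne hne)
  exact htz (le_sup_right.trans (hz.le_of_ge hzt le_sup_left))

theorem le_of_maximal_avoiders_of_le_sup (hjsd : JoinSemidistrib α)
    (hmin : NoObstructionBelow m w) (hma : m < a) (haw : a ≤ w)
    (hz : Maximal (· ∈ avoiders m a w) z) (hr : r ∈ avoiders m a w) (hraz : r ≤ a ⊔ z) :
    r ≤ z := by
  by_contra hrz
  have hzr : z ⊔ r = w := sup_eq_of_maximal_avoiders hmin hz hr hrz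
  have hza : z ⊔ a = w :=
    le_antisymm (sup_le hz.prop.1 haw) (hzr ▸ sup_le le_sup_left (hraz.trans_eq (sup_comm a z)))
  have hzw := hjsd z a r (hza.trans hzr.symm)
  rw [hr.2, sup_eq_left.2 (le_of_mem_avoiders hz.prop), hza] at hzw
  exact not_le_of_mem_avoiders hma hz.prop (hzw ▸ haw)

theorem sup_inf_inf_eq_of_maximal_avoiders (hjsd : JoinSemidistrib α)
    (hmin : NoObstructionBelow m w) (hma : m < a) (haw : a ≤ w)
    (hy : Maximal (· ∈ avoiders m a w) y) (hz : Maximal (· ∈ avoiders m a w) z) :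
    (a ⊔ y ⊓ z) ⊓ y = y ⊓ z := by
  have hp : y ⊓ z ≤ (a ⊔ y ⊓ z) ⊓ y := le_inf le_sup_right inf_le_left
  have hmr : m ≤ (a ⊔ y ⊓ z) ⊓ y :=
    (le_inf (le_of_mem_avoiders hy.prop) (le_of_mem_avoiders hz.prop)).trans hp
  refine le_antisymm (le_inf inf_le_right ?_) hp
  exact le_of_maximal_avoiders_of_le_sup hjsd hmin hma haw hz
    (mem_avoiders_of_le hy.prop hmr inf_le_right) (inf_le_left.trans (sup_le_sup_left inf_le_right a))

theorem exists_maximal_avoiders_ne {u v : α} (hma : m < a) (haw : a ≤ w)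
    (hu : u ∈ avoiders m a w) (hv : v ∈ avoiders m a w) (huv : u ⊔ v = w) (T : α) :
    ∃ y, Maximal (· ∈ avoiders m a w) y ∧ y ≠ T := by
  obtain ⟨Y, huY, hY⟩ := Finite.exists_le_maximal hu
  obtain ⟨Z, hvZ, hZ⟩ := Finite.exists_le_maximal hv
  by_contra! h
  rw [h Y hY] at huY
  rw [h Z hZ] at hvZ hZ
  exact not_le_of_mem_avoiders hma hZ.prop (haw.trans (huv ▸ sup_le huY hvZ))

theorem exists_maximal_avoiders_above_atoms (hcc : CrosscutSimplicial α)
    (hmin : NoObstructionBelow m w) (hcov : m ⋖ a) (haw : a ≤ w) :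
    ∃ T, Maximal (· ∈ avoiders m a w) T ∧ ∀ c, m ⋖ c → c ≤ w → c ≠ a → c ≤ T := by
  set s := (Set.toFinite {c | m ⋖ c ∧ c ≤ w ∧ c ≠ a}).toFinset
  have hs (c : α) : c ∈ s ↔ m ⋖ c ∧ c ≤ w ∧ c ≠ a := Set.Finite.mem_toFinset _
  have hlt : s.fold (· ⊔ · : α → α → α) m id < w :=
    hcc m w (hcov.le.trans haw) s (fun c hc => ⟨((hs c).1 hc).1, ((hs c).1 hc).2.1⟩)
      ⟨a, ⟨hcov, haw⟩, fun ha => ((hs a).1 ha).2.2 rfl⟩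
  have hmem : s.fold (· ⊔ · : α → α → α) m id ∈ avoiders m a w := by
    refine fold_mem_avoiders hmin hcov.le (fun c hc => ?_) hlt
    obtain ⟨hmc, hcw, hca⟩ := (hs c).1 hc
    exact ⟨hcw, inf_eq_of_covBy_of_ne hcov hmc hca.symm⟩
  obtain ⟨T, hle, hT⟩ := Finite.exists_le_maximal hmem
  refine ⟨T, hT, fun c hmc hcw hca => ?_⟩
  exact (((Finset.fold_sup_le_iff (f := id)).1 le_rfl).2 c ((hs c).2 ⟨hmc, hcw, hca⟩)).trans hle

theorem lt_inf_of_forall_covBy_le (hma : m < a) (haw : a ≤ w) (hy : y ∈ avoiders m a w)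
    (ht : t ∈ avoiders m a w) (hyt : y ⊔ t = w) (hatoms : ∀ c, m ⋖ c → c ≤ w → c ≠ a → c ≤ t) :
    m < y ⊓ t := by
  have hmy : m < y := by
    refine (le_of_mem_avoiders hy).lt_of_ne fun hmy => not_le_of_mem_avoiders hma ht ?_
    exact haw.trans (hyt ▸ sup_le (hmy ▸ le_of_mem_avoiders ht) le_rfl)
  obtain ⟨c, hmc, hcy⟩ := exists_covBy_le_of_lt hmy
  have hca : c ≠ a := fun hca => not_le_of_mem_avoiders hma hy (hca ▸ hcy)
  exact hmc.lt.trans_le (le_inf hcy (hatoms c hmc (hcy.trans hy.1) hca))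

end Avoiders

theorem not_meetObstruction_of_noObstructionBelow [Finite α] (hjsd : JoinSemidistrib α)
    (hcc : CrosscutSimplicial α) {m a u v : α} (hmin : NoObstructionBelow m (u ⊔ v)) :
    ¬ MeetObstruction m a u v := by
  rintro ⟨hcov, hu, hv, haw⟩
  obtain ⟨T, hT, hatoms⟩ := exists_maximal_avoiders_above_atoms hcc hmin hcov haw
  obtain ⟨y, hy, hyT⟩ :=
    exists_maximal_avoiders_ne hcov.lt haw ⟨le_sup_left, hu⟩ ⟨le_sup_right, hv⟩ rfl T
  have hsup : y ⊔ T = u ⊔ v :=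
    sup_eq_of_maximal_avoiders hmin hy hT.prop fun hTy => hyT (hT.eq_of_le hy.prop hTy).symm
  have hp : m < y ⊓ T := lt_inf_of_forall_covBy_le hcov.lt haw hy.prop hT.prop hsup hatoms
  have hpy := sup_inf_inf_eq_of_maximal_avoiders hjsd hmin hcov.lt haw hy hT
  have hpT := sup_inf_inf_eq_of_maximal_avoiders hjsd hmin hcov.lt haw hT hy
  rw [inf_comm T y] at hpT
  have hpw := inf_sup_eq_of_forall_not_meetObstruction
    (fun c => hmin (y ⊓ T) c y T (Prod.mk_lt_mk_of_lt_of_le (toDual_lt_toDual.2 hp) hsup.le))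
    hpy hpT
  rw [hsup, inf_eq_left.2 (sup_le haw (inf_le_left.trans hy.prop.1))] at hpw
  exact not_le_of_mem_avoiders hcov.lt hy.prop (le_sup_left.trans (hpw.le.trans inf_le_left))

theorem not_meetObstruction [Finite α] (hjsd : JoinSemidistrib α) (hcc : CrosscutSimplicial α)
    (m a u v : α) : ¬ MeetObstruction m a u v := by
  suffices ∀ q : αᵒᵈ × α, ∀ m a u v : α, (toDual m, u ⊔ v) = q → ¬ MeetObstruction m a u v from
    this _ m a u v rfl
  intro q
  induction q using WellFoundedLT.induction with
  | _ q ih =>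
    rintro m a u v rfl
    exact not_meetObstruction_of_noObstructionBelow hjsd hcc
      fun m' a' u' v' hlt => ih _ hlt m' a' u' v' rfl

theorem JoinSemidistrib.meetSemidistrib [Finite α] (hjsd : JoinSemidistrib α)
    (hcc : CrosscutSimplicial α) : MeetSemidistrib α :=
  .of_forall_not_meetObstruction (not_meetObstruction hjsd hcc)

/-- Corollary: if a finite join-semidistributive lattice is crosscut-simplicial, then so is
every sublattice and every lattice quotient (image under a surjective lattice homomorphism). -/
theorem stmt_3 {α : Type u} [Lattice α] [Fintype α]
    (hjsd : JoinSemidistrib α) (hcc : CrosscutSimplicial α) :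
    (∀ S : Sublattice α, CrosscutSimplicial S) ∧
    (∀ (β : Type v) [Lattice β] (φ : LatticeHom α β),
      Function.Surjective φ → CrosscutSimplicial β) := by
  have hmsd := hjsd.meetSemidistrib hcc
  exact ⟨fun S => (hmsd.of_injective S.subtype S.subtype_injective).crosscutSimplicial,
    fun β _ φ hφ => (hmsd.of_surjective φ hφ).crosscutSimplicial⟩
end

section
/- Let L be a finite join-semidistributive lattice, let w ∈ L, and let can(w) be the canonical join representation of w. Then for each element y covered by w there is a unique canonical joinand η(y) ∈ can(w) with y ∨ η(y) = w; the map η from the set of lower covers of w to can(w) is a bijection; and for each lower cover y of w one has y ≥ ⋁(can(w) \ {η(y)}) and y ∈ K(η(y)), i.e., η(y)_* ≤ y and η(y) ≰ y. -/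
universe u v

section Aux

variable {α : Type*} [Lattice α] [OrderBot α] [DecidableEq α]

/-- Any finite join representation contains an irredundant one. -/
lemma exists_irred_subset (w : α) :
    ∀ S : Finset α, S.sup id = w → ∃ B ⊆ S, IrredJoinRep B w := by
  intro S
  induction S using Finset.strongInductionOn with
  | _ S ih =>
    intro hS
    by_cases h : ∀ S' ⊂ S, S'.sup id < w
    · exact ⟨S, subset_rfl, hS, h⟩
    · push_neg at h
      obtain ⟨S', hsub, hge⟩ := h
      have hle : S'.sup id ≤ w := hS ▸ Finset.sup_mono hsub.subset
      obtain ⟨B, hB, hirr⟩ := ih S' hsub (hle.lt_or_eq.resolve_left hge)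
      exact ⟨B, hB.trans hsub.subset, hirr⟩

/-- If `u ⊔ v = w`, every canonical joinand of `w` lies below `u` or below `v`. -/
lemma pair_refine {w : α} {A : Finset α} (hA : CanonicalJoinRep A w)
    {u v : α} (huv : u ⊔ v = w) {j : α} (hj : j ∈ A) :
    j ≤ u ∨ j ≤ v := by
  have hsup : ({u, v} : Finset α).sup id = w := by
    simp only [Finset.sup_insert, Finset.sup_singleton, id]
    exact huv
  obtain ⟨B, hB, hirr⟩ := exists_irred_subset w _ hsup
  obtain ⟨b, hb, hjb⟩ := hA.2 B hirr j hj
  rcases Finset.mem_insert.mp (hB hb) with h | h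
  · exact Or.inl (h ▸ hjb)
  · exact Or.inr ((Finset.mem_singleton.mp h) ▸ hjb)

lemma cover_sup {y w : α} (hy : y ⋖ w) {x : α} (hxw : x ≤ w) (hxy : ¬ x ≤ y) :
    y ⊔ x = w := by
  have h1 : y < y ⊔ x :=
    lt_of_le_of_ne le_sup_left (fun h => hxy (le_trans le_sup_right h.ge))
  have h2 : y ⊔ x ≤ w := sup_le hy.le hxw
  exact (h2.lt_or_eq).resolve_left (hy.2 h1)

/-- Uniqueness of the canonical joinand not below a given lower cover. -/
lemma joinand_unique {w : α} {A : Finset α} (hjsd : JoinSemidistrib α)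
    (hA : CanonicalJoinRep A w) {y : α} (hy : y ⋖ w)
    {j j' : α} (hj : j ∈ A) (hj' : j' ∈ A) (hjy : ¬ j ≤ y) (hj'y : ¬ j' ≤ y) :
    j = j' := by
  have hjw : j ≤ w := hA.1.1 ▸ Finset.le_sup (f := id) hj
  have hj'w : j' ≤ w := hA.1.1 ▸ Finset.le_sup (f := id) hj'
  have e1 : y ⊔ j = w := cover_sup hy hjw hjy
  have e2 : y ⊔ j' = w := cover_sup hy hj'w hj'y
  have e3 : y ⊔ (j ⊓ j') = w := by
    have h := hjsd y j j' (e1.trans e2.symm)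
    rw [h, e1]
  rcases pair_refine hA e3 hj with h | h
  · exact absurd h hjy
  · rcases pair_refine hA e3 hj' with h' | h'
    · exact absurd h' hj'y
    · exact le_antisymm (h.trans inf_le_right) (h'.trans inf_le_left)

/-- Every element strictly below the joinand `j` is below the lower cover `y`. -/
lemma lower_le {w : α} {A : Finset α} (hA : CanonicalJoinRep A w) {y : α} (hy : y ⋖ w)
    {j : α} (hj : j ∈ A) (hjy : ¬ j ≤ y) {x : α} (hx : x < j) : x ≤ y := by
  by_contra hxy
  have hjw : j ≤ w := hA.1.1 ▸ Finset.le_sup (f := id) hj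
  have e : y ⊔ x = w := cover_sup hy (hx.le.trans hjw) hxy
  rcases pair_refine hA e hj with h | h
  · exact hjy h
  · exact hx.not_ge h

end Aux

/-- Lemma (canonical cover): for `w` with canonical join representation `A`, the map `η`
sending each lower cover `y` of `w` to the unique canonical joinand with `y ⊔ η y = w`
is a bijection, with `⋁(A \ {η y}) ≤ y` and `y ∈ K(η y)`. -/
theorem stmt_5 {α : Type*} [Lattice α] [OrderBot α] [Fintype α] [DecidableEq α]
    (hjsd : JoinSemidistrib α) (w : α) (A : Finset α) (hA : CanonicalJoinRep A w) :
    ∃ η : α → α,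
      (∀ y : α, y ⋖ w →
        η y ∈ A ∧ y ⊔ η y = w ∧
        (∀ j ∈ A, y ⊔ j = w → j = η y) ∧
        (A.erase (η y)).sup id ≤ y ∧
        (∀ jstar : α, jstar ⋖ η y → jstar ≤ y) ∧ ¬ η y ≤ y) ∧
      (∀ y y' : α, y ⋖ w → y' ⋖ w → η y = η y' → y = y') ∧
      (∀ j ∈ A, ∃ y : α, y ⋖ w ∧ η y = j) := by
  classical
  refine ⟨fun y => if h : ∃ j, j ∈ A ∧ ¬ j ≤ y then h.choose else w, ?_, ?_, ?_⟩
  case _ =>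
    -- properties at each lower cover
    intro y hy
    have hex : ∃ j, j ∈ A ∧ ¬ j ≤ y := by
      by_contra h
      push_neg at h
      have : A.sup id ≤ y := Finset.sup_le (fun j hj => h j hj)
      rw [hA.1.1] at this
      exact hy.lt.not_ge this
    simp only [dif_pos hex]
    obtain ⟨hmem, hnle⟩ := hex.choose_spec
    have hjw : hex.choose ≤ w := hA.1.1 ▸ Finset.le_sup (f := id) hmem
    refine ⟨hmem, cover_sup hy hjw hnle, ?_, ?_, ?_, hnle⟩
    · intro j hj hjsup
      have hjy : ¬ j ≤ y := by
        intro hle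
        rw [sup_eq_left.mpr hle] at hjsup
        exact hy.lt.ne hjsup
      exact joinand_unique hjsd hA hy hj hmem hjy hnle
    · refine Finset.sup_le (fun j hj => ?_)
      obtain ⟨hne, hjA⟩ := Finset.mem_erase.mp hj
      by_contra hjy
      exact hne (joinand_unique hjsd hA hy hjA hmem hjy hnle)
    · intro jstar hcov
      exact lower_le hA hy hmem hnle hcov.lt
  case _ =>
    -- injectivity
    intro y y' hy hy' heq
    have hex : ∃ j, j ∈ A ∧ ¬ j ≤ y := by
      by_contra h
      push_neg at h
      have : A.sup id ≤ y := Finset.sup_le (fun j hj => h j hj)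
      rw [hA.1.1] at this
      exact hy.lt.not_ge this
    have hex' : ∃ j, j ∈ A ∧ ¬ j ≤ y' := by
      by_contra h
      push_neg at h
      have : A.sup id ≤ y' := Finset.sup_le (fun j hj => h j hj)
      rw [hA.1.1] at this
      exact hy'.lt.not_ge this
    simp only [dif_pos hex, dif_pos hex'] at heq
    obtain ⟨hmem, hnle⟩ := hex.choose_spec
    obtain ⟨hmem', hnle'⟩ := hex'.choose_spec
    rw [heq] at hnle
    by_contra hne
    have hy'y : ¬ y' ≤ y := by
      intro h
      rcases h.lt_or_eq with h' | h'
      · exact hy'.2 h' hy.lt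
      · exact hne h'.symm
    have e : y ⊔ y' = w := cover_sup hy hy'.le hy'y
    rcases pair_refine hA e hmem' with h | h
    · exact hnle h
    · exact hnle' h
  case _ =>
    -- surjectivity
    intro j hj
    have hlt : (A.erase j).sup id < w := hA.1.2 _ (Finset.erase_ssubset hj)
    obtain ⟨y, hey, hy⟩ := exists_le_covBy_of_lt hlt
    have hjy : ¬ j ≤ y := by
      intro h
      have : A.sup id ≤ y := by
        refine Finset.sup_le (fun a ha => ?_)
        by_cases haj : a = j
        · exact haj ▸ h
        · exact le_trans (Finset.le_sup (f := id) (Finset.mem_erase.mpr ⟨haj, ha⟩)) hey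
      rw [hA.1.1] at this
      exact hy.lt.not_ge this
    refine ⟨y, hy, ?_⟩
    have hex : ∃ j', j' ∈ A ∧ ¬ j' ≤ y := ⟨j, hj, hjy⟩
    simp only [dif_pos hex]
    obtain ⟨hmem, hnle⟩ := hex.choose_spec
    exact joinand_unique hjsd hA hy hmem hj hnle hjy
end

section
/- Let L be a finite lattice. Then L is join-semidistributive if and only if for every w ∈ L and every y covered by w there exists a unique minimal element whose join with y equals w; that is, there exists j ∈ L with y ∨ j = w such that every x ∈ L with y ∨ x = w satisfies j ≤ x. -/
universe u v

/-- Proposition (converse): a finite lattice is join-semidistributive iff for every cover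
`y ⋖ w` there is a unique minimal element whose join with `y` equals `w`. -/
theorem stmt_7 {α : Type*} [Lattice α] [Fintype α] :
    JoinSemidistrib α ↔
      ∀ w y : α, y ⋖ w → ∃ j : α, y ⊔ j = w ∧ ∀ x : α, y ⊔ x = w → j ≤ x := by
  classical
  constructor
  · intro hsd w y hyw
    set S : Finset α := Finset.univ.filter (fun x => y ⊔ x = w) with hS
    have hwS : w ∈ S := by
      simp [hS, sup_eq_right.2 hyw.le]
    have hne : S.Nonempty := ⟨w, hwS⟩
    have hclosed : ∀ a ∈ (S : Set α), ∀ b ∈ (S : Set α), a ⊓ b ∈ (S : Set α) := by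
      intro a ha b hb
      simp only [hS, Finset.coe_filter, Set.mem_setOf_eq, Finset.mem_univ, true_and] at *
      rw [hsd y a b (ha.trans hb.symm), ha]
    have hmem : S.inf' hne id ∈ (S : Set α) := by
      exact Finset.inf'_mem (S : Set α) hclosed S hne id (fun x hx => Finset.mem_coe.2 hx)
    simp only [hS, Finset.coe_filter, Set.mem_setOf_eq, Finset.mem_univ, true_and] at hmem
    refine ⟨S.inf' hne id, hmem, fun x hx => ?_⟩
    exact Finset.inf'_le id (by simp [hS, hx])
  · intro h x y z hxy
    have hle : x ⊔ (y ⊓ z) ≤ x ⊔ y := sup_le_sup_left inf_le_left x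
    rcases eq_or_lt_of_le hle with heq | hlt
    · exact heq
    · exfalso
      obtain ⟨u, hau, huw⟩ := hlt.exists_le_covby
      obtain ⟨j, hj, hjmin⟩ := h (x ⊔ y) u huw
      have hxu : x ≤ u := le_trans le_sup_left hau
      have huy : u ⊔ y = x ⊔ y :=
        le_antisymm (sup_le huw.lt.le (le_sup_right))
          (sup_le (hxu.trans le_sup_left) le_sup_right)
      have huz : u ⊔ z = x ⊔ y := by
        apply le_antisymm (sup_le huw.lt.le (hxy ▸ (le_sup_right : z ≤ x ⊔ z)))
        rw [hxy]
        exact sup_le (hxu.trans le_sup_left) le_sup_right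
      have hjy : j ≤ y := hjmin y huy
      have hjz : j ≤ z := hjmin z huz
      have hju : j ≤ u := (le_inf hjy hjz).trans ((le_sup_right : y ⊓ z ≤ x ⊔ (y ⊓ z)).trans hau)
      have : u ⊔ j = u := sup_eq_left.2 hju
      rw [this] at hj
      exact huw.lt.ne hj
end

section
/- Let L be a finite semidistributive lattice and let F be a set of join-irreducible elements of L with |F| ≥ 3 such that every proper subset of F is a face of the canonical join complex of L. Then for all distinct j and j' in F, the elements ⋁(F \ {j}) and ⋁(F \ {j'}) are incomparable. -/
universe u v

section Aux

variable {α : Type*} [Lattice α] [OrderBot α] [Fintype α] [DecidableEq α]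

/-- For a join-irreducible `j`, the sup of any finset of elements strictly below `j`
is strictly below `j`. -/
lemma sup_lt_of_joinIrred {j : α} (hj : JoinIrred j) :
    ∀ S : Finset α, (∀ x ∈ S, x < j) → S.sup id < j := by
  intro S
  induction S using Finset.induction_on with
  | empty =>
      intro _
      simpa using (bot_lt_iff_ne_bot.mpr hj.1)
  | @insert a S _ ih =>
      intro hS
      have ha : a < j := hS a (Finset.mem_insert_self a S)
      have hS' : S.sup id < j := ih fun x hxS => hS x (Finset.mem_insert_of_mem hxS)
      rw [Finset.sup_insert]
      refine lt_of_le_of_ne (sup_le ha.le hS'.le) ?_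
      intro heq
      rcases hj.2 a (S.sup id) heq.symm with h1 | h1
      · exact absurd h1.symm (ne_of_lt ha)
      · exact absurd h1.symm (ne_of_lt hS')

/-- Key lemma: a join-irreducible member of `F` is not below the join of the rest. -/
lemma joinIrred_not_le_sup_erase (hmsd : MeetSemidistrib α)
    (F : Finset α) (hF : ∀ j ∈ F, JoinIrred j) (hcard : 3 ≤ F.card)
    (hfaces : ∀ F' ⊂ F, JoinsCanonically F') :
    ∀ j ∈ F, ¬ j ≤ (F.erase j).sup id := by
  classical
  intro j hj hle
  have hjirr : JoinIrred j := hF j hj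
  -- j⋆ : the join of all elements strictly below j
  set js : α := (Finset.univ.filter (fun x => x < j)).sup id with hjs
  have hjs_lt : js < j := by
    apply sup_lt_of_joinIrred hjirr
    intro x hx
    exact (Finset.mem_filter.mp hx).2
  have hle_js : ∀ x : α, x < j → x ≤ js := by
    intro x hx
    exact Finset.le_sup (f := id) (Finset.mem_filter.mpr ⟨Finset.mem_univ x, hx⟩)
  -- every pair {j,k} is a proper subset of F
  have hpair : ∀ k ∈ F.erase j, ({j, k} : Finset α) ⊂ F := by
    intro k hk
    have hkF : k ∈ F := Finset.mem_of_mem_erase hk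
    have hsub : ({j, k} : Finset α) ⊆ F := by
      intro x hx
      rcases Finset.mem_insert.mp hx with h | h
      · exact h ▸ hj
      · exact (Finset.mem_singleton.mp h) ▸ hkF
    refine hsub.ssubset_of_ne ?_
    intro hEq
    have h2 : ({j, k} : Finset α).card ≤ 2 := (Finset.card_insert_le _ _).trans (by simp)
    rw [hEq] at h2
    omega
  have hcanpair : ∀ k ∈ F.erase j, CanonicalJoinRep ({j, k} : Finset α) (j ⊔ k) := by
    intro k hk
    have hcan := hfaces _ (hpair k hk)
    have hsup : ({j, k} : Finset α).sup id = j ⊔ k := by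
      simp [Finset.sup_insert]
    rwa [JoinsCanonically, hsup] at hcan
  -- every other element k of F : j is not below k
  have hnotle : ∀ k ∈ F.erase j, ¬ j ≤ k := by
    intro k hk hjk
    have hkj : k ≠ j := Finset.ne_of_mem_erase hk
    have hcan := hcanpair k hk
    have hss : ({k} : Finset α) ⊂ ({j, k} : Finset α) := by
      constructor
      · intro x hx
        simp only [Finset.mem_singleton] at hx
        simp [hx]
      · intro hsub
        have := hsub (Finset.mem_insert_self j {k})
        simp only [Finset.mem_singleton] at this
        exact hkj.symm this
    have hlt := hcan.1.2 _ hss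
    simp only [Finset.sup_singleton, id] at hlt
    rw [sup_eq_right.mpr hjk] at hlt
    exact lt_irrefl _ hlt
  -- key per-element fact : j ⊓ (k ⊔ js) = js
  have hkey : ∀ k ∈ F.erase j, j ⊓ (k ⊔ js) = js := by
    intro k hk
    have hnk : ¬ j ≤ k := hnotle k hk
    have hub : j ⊓ (k ⊔ js) ≤ j := inf_le_left
    refine le_antisymm ?_ (le_inf hjs_lt.le le_sup_right)
    rcases lt_or_eq_of_le hub with hlt | heq
    · exact hle_js _ hlt
    · -- then j ≤ k ⊔ js : derive a contradiction with the canonical pair {j,k}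
      exfalso
      have hjle : j ≤ k ⊔ js := heq ▸ inf_le_right
      have hcan := hcanpair k hk
      set w : α := j ⊔ k with hw
      have hkltw : k < w := by
        rcases lt_or_eq_of_le (le_sup_right : k ≤ w) with h | h
        · exact h
        · exact absurd (h ▸ le_sup_left : j ≤ k) hnk
      -- js ⊔ k = w
      have hkjsw : js ⊔ k = w := by
        apply le_antisymm
        · exact sup_le (hjs_lt.le.trans le_sup_left) le_sup_right
        · exact sup_le (hjle.trans (by rw [sup_comm])) le_sup_right
      by_cases hjsk : js ≤ k
      · rw [sup_eq_right.mpr hjsk] at hkjsw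
        exact hnk (hkjsw ▸ le_sup_left)
      · -- B = {js, k} is an irredundant join rep of w; {j,k} must refine it
        have hB : IrredJoinRep ({js, k} : Finset α) w := by
          constructor
          · simpa [Finset.sup_insert] using hkjsw
          · intro A' hA'
            obtain ⟨x, hxmem, hxnot⟩ := Finset.exists_of_ssubset hA'
            have hA'sub : A' ⊆ ({js, k} : Finset α) := hA'.1
            rcases Finset.mem_insert.mp hxmem with h | h
            · -- js ∉ A', so A' ⊆ {k}
              have hsub' : A' ⊆ ({k} : Finset α) := by
                intro y hy
                rcases Finset.mem_insert.mp (hA'sub hy) with h' | h'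
                · exact absurd (h' ▸ hy : js ∈ A') (h ▸ hxnot)
                · exact h'
              calc A'.sup id ≤ ({k} : Finset α).sup id := Finset.sup_mono hsub'
                _ = k := by simp
                _ < w := hkltw
            · -- k ∉ A', so A' ⊆ {js}
              rw [Finset.mem_singleton] at h
              have hsub' : A' ⊆ ({js} : Finset α) := by
                intro y hy
                rcases Finset.mem_insert.mp (hA'sub hy) with h' | h'
                · simp [h']
                · exact absurd ((Finset.mem_singleton.mp h') ▸ hy : k ∈ A') (h ▸ hxnot)
              calc A'.sup id ≤ ({js} : Finset α).sup id := Finset.sup_mono hsub'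
                _ = js := by simp
                _ < j := hjs_lt
                _ ≤ w := le_sup_left
        have href := hcan.2 _ hB j (Finset.mem_insert_self _ _)
        obtain ⟨b, hb, hjb⟩ := href
        rcases Finset.mem_insert.mp hb with h | h
        · exact absurd (h ▸ hjb : j ≤ js) (not_le_of_gt hjs_lt)
        · exact hnk ((Finset.mem_singleton.mp h) ▸ hjb)
  -- fold with meet-semidistributivity over F.erase j
  have hfold : ∀ S : Finset α, S ⊆ F.erase j → j ⊓ (S.sup id ⊔ js) = js := by
    intro S
    induction S using Finset.induction_on with
    | empty => intro _; simp [inf_eq_right.mpr hjs_lt.le]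
    | @insert a S _ ih =>
        intro hsub
        have haF : a ∈ F.erase j := hsub (Finset.mem_insert_self a S)
        have hS : S ⊆ F.erase j := fun x hx => hsub (Finset.mem_insert_of_mem hx)
        have h1 : j ⊓ (a ⊔ js) = js := hkey a haF
        have h2 : j ⊓ (S.sup id ⊔ js) = js := ih hS
        have h3 := hmsd j (a ⊔ js) (S.sup id ⊔ js) (h1.trans h2.symm)
        rw [h1] at h3
        have harr : (a ⊔ js) ⊔ (S.sup id ⊔ js) = (insert a S).sup id ⊔ js := by
          rw [Finset.sup_insert]
          simp only [id]
          ac_rfl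
        rw [harr] at h3
        exact h3
  have hfinal := hfold (F.erase j) (Finset.Subset.refl _)
  have hcontr : j ⊓ ((F.erase j).sup id ⊔ js) = j :=
    inf_eq_left.mpr (hle.trans le_sup_left)
  rw [hfinal] at hcontr
  exact (ne_of_lt hjs_lt) hcontr

end Aux

/-- Lemma (simplex incomparable): in a finite semidistributive lattice, if `|F| ≥ 3` and every
proper subset of `F` is a face of the canonical join complex, then `⋁(F \ {j})` and
`⋁(F \ {j'})` are incomparable for distinct `j, j' ∈ F`. -/
theorem stmt_9 {α : Type*} [Lattice α] [OrderBot α] [Fintype α] [DecidableEq α]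
    (hsd : JoinSemidistrib α ∧ MeetSemidistrib α)
    (F : Finset α) (hF : ∀ j ∈ F, JoinIrred j) (hcard : 3 ≤ F.card)
    (hfaces : ∀ F' ⊂ F, JoinsCanonically F') :
    ∀ j ∈ F, ∀ j' ∈ F, j ≠ j' →
      ¬ (F.erase j).sup id ≤ (F.erase j').sup id ∧
      ¬ (F.erase j').sup id ≤ (F.erase j).sup id := by
  classical
  have key := joinIrred_not_le_sup_erase hsd.2 F hF hcard hfaces
  intro j hj j' hj' hne
  have hsupF : ∀ x ∈ F, F.sup id = x ⊔ (F.erase x).sup id := by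
    intro x hx
    conv_lhs => rw [← Finset.insert_erase hx]
    rw [Finset.sup_insert]
    rfl
  constructor
  · intro hle
    apply key j' hj'
    have h1 : F.sup id ≤ (F.erase j').sup id := by
      rw [hsupF j hj]
      exact sup_le (Finset.le_sup (f := id) (Finset.mem_erase.mpr ⟨hne, hj⟩)) hle
    exact (Finset.le_sup (f := id) hj').trans h1
  · intro hle
    apply key j hj
    have h1 : F.sup id ≤ (F.erase j).sup id := by
      rw [hsupF j' hj']
      exact sup_le (Finset.le_sup (f := id) (Finset.mem_erase.mpr ⟨hne.symm, hj'⟩)) hle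
    exact (Finset.le_sup (f := id) hj).trans h1
end

section
/- Let L be a finite join-semidistributive lattice and let F be a set of join-irreducible elements of L satisfying: |F| ≥ 3; every proper subset of F is a face of the canonical join complex of L; the join ⋁F is irredundant (i.e., ⋁F' < ⋁F for every proper subset F' of F); and F is not a face of the canonical join complex. Then there exists j ∈ F such that κ(j) does not exist, i.e., the set K(j) has no greatest element. -/
universe u v

section AuxProof

variable {α : Type*} [Lattice α] [OrderBot α]

/-- Every element strictly below a join-irreducible `j` is below any lower cover of `j`. -/
lemma aux_le_cov {j jstar x : α} (hj : JoinIrred j) (hcov : jstar ⋖ j) (hx : x < j) :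
    x ≤ jstar := by
  have h1 : x ⊔ jstar ≤ j := sup_le hx.le hcov.le
  rcases eq_or_lt_of_le h1 with he | hl
  · rcases hj.2 x jstar he.symm with h | h
    · exact absurd h.symm hx.ne
    · exact absurd h.symm hcov.lt.ne
  · rcases hcov.eq_or_eq (le_sup_right : jstar ≤ x ⊔ jstar) hl.le with h | h
    · exact le_sup_left.trans h.le
    · exact absurd h hl.ne

variable [DecidableEq α]

/-- Key pairwise lemma: if `{j, j'}` joins canonically, `j ≠ j'`, and `κ(j)` exists
(as `m`, w.r.t. a lower cover `jstar` of `j`), then `j' ≤ m`. -/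
lemma aux_pair {j j' jstar m : α}
    (hface : JoinsCanonically ({j, j'} : Finset α)) (hne : j ≠ j')
    (hcov : jstar ⋖ j)
    (hm : IsGreatest {a : α | jstar ≤ a ∧ ¬ j ≤ a} m) : j' ≤ m := by
  have hv : (({j, j'} : Finset α)).sup id = j ⊔ j' := by
    simp [Finset.sup_insert, Finset.sup_singleton]
  -- irredundancy of the pair
  have hj'j : ¬ j' ≤ j := by
    have hss : ({j} : Finset α) ⊂ ({j, j'} : Finset α) := by
      refine Finset.ssubset_iff_subset_ne.2 ⟨by simp, ?_⟩
      intro h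
      have : j' ∈ ({j} : Finset α) := h ▸ (by simp : j' ∈ ({j, j'} : Finset α))
      exact hne (Finset.mem_singleton.1 this).symm
    have := hface.1.2 _ hss
    rw [hv, Finset.sup_singleton] at this
    exact left_lt_sup.1 this
  have hjj' : ¬ j ≤ j' := by
    have hss : ({j'} : Finset α) ⊂ ({j, j'} : Finset α) := by
      refine Finset.ssubset_iff_subset_ne.2 ⟨by simp, ?_⟩
      intro h
      have : j ∈ ({j'} : Finset α) := h ▸ (by simp : j ∈ ({j, j'} : Finset α))
      exact hne (Finset.mem_singleton.1 this)
    have := hface.1.2 _ hss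
    rw [hv, Finset.sup_singleton] at this
    exact right_lt_sup.1 this
  by_contra hj'm
  -- j ≤ jstar ⊔ j'
  have hjle : j ≤ jstar ⊔ j' := by
    by_contra h
    exact hj'm (le_sup_right.trans (hm.2 ⟨le_sup_left, h⟩))
  have hvv : jstar ⊔ j' = j ⊔ j' :=
    le_antisymm (sup_le (hcov.le.trans le_sup_left) le_sup_right)
      (sup_le hjle le_sup_right)
  have hnej : jstar ≠ j' := by
    intro h
    subst h
    exact hjj' (hjle.trans (by simp))
  -- {jstar, j'} is an irredundant join representation of j ⊔ j'
  have hB' : IrredJoinRep ({jstar, j'} : Finset α) ((({j, j'} : Finset α)).sup id) := by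
    rw [hv]
    constructor
    · simpa [Finset.sup_insert, Finset.sup_singleton] using hvv
    · intro A' hA'
      have hsub0 : ∀ x ∈ A', x = jstar ∨ x = j' := by
        intro x hx
        have := hA'.1 hx
        simp only [Finset.mem_insert, Finset.mem_singleton] at this
        exact this
      by_cases hj's : j' ∈ A'
      · have hjs : jstar ∉ A' := by
          intro hjs
          apply hA'.ne
          apply Finset.Subset.antisymm hA'.1
          intro x hx
          simp only [Finset.mem_insert, Finset.mem_singleton] at hx
          rcases hx with h | h
          · exact h ▸ hjs
          · exact h ▸ hj's
        have hsup : A'.sup id ≤ j' := by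
          refine Finset.sup_le fun x hx => ?_
          rcases hsub0 x hx with h | h
          · exact absurd (h ▸ hx) hjs
          · exact h.le
        exact lt_of_le_of_lt hsup (right_lt_sup.2 hjj')
      · have hsup : A'.sup id ≤ jstar := by
          refine Finset.sup_le fun x hx => ?_
          rcases hsub0 x hx with h | h
          · exact h.le
          · exact absurd (h ▸ hx) hj's
        exact lt_of_le_of_lt hsup (lt_of_lt_of_le hcov.lt le_sup_left)
  obtain ⟨b, hb, hjb⟩ := hface.2 _ hB' j (by simp)
  rcases Finset.mem_insert.1 hb with h | h
  · exact absurd (h ▸ hjb) hcov.lt.not_ge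
  · exact hjj' ((Finset.mem_singleton.1 h) ▸ hjb)

end AuxProof

/-- In a join-semidistributive lattice the set `{a | a ⊔ y = w}` is closed under
finite (nonempty) meets. -/
lemma aux_inf_mem {α : Type*} [Lattice α] (hjsd : JoinSemidistrib α) (y w : α)
    (s : Finset α) (hne : s.Nonempty) (h : ∀ a ∈ s, a ⊔ y = w) :
    s.inf' hne id ⊔ y = w := by
  revert h
  induction hne using Finset.Nonempty.cons_induction with
  | singleton a => intro h; simpa using h a (by simp)
  | cons a s ha hs ih =>
    intro h
    have h1 : a ⊔ y = w := h a (Finset.mem_cons_self a s)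
    have h2 : s.inf' hs id ⊔ y = w := ih fun b hb => h b (Finset.mem_cons.2 (Or.inr hb))
    rw [Finset.inf'_cons hs]
    have heq : y ⊔ a = y ⊔ s.inf' hs id := by
      rw [sup_comm y a, sup_comm y (s.inf' hs id), h1, h2]
    have hkey := hjsd y a (s.inf' hs id) heq
    calc (id a ⊓ s.inf' hs id) ⊔ y = y ⊔ (a ⊓ s.inf' hs id) := sup_comm _ _
    _ = y ⊔ a := hkey
    _ = a ⊔ y := sup_comm _ _
    _ = w := h1

/-- Lemma (if direction): if `|F| ≥ 3`, every proper subset of `F` is a face, `⋁F` is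
irredundant, and `F` is not a face, then `κ(j)` fails to exist for some `j ∈ F`. -/
theorem stmt_10 {α : Type*} [Lattice α] [OrderBot α] [Fintype α] [DecidableEq α]
    (hjsd : JoinSemidistrib α)
    (F : Finset α) (hF : ∀ j ∈ F, JoinIrred j) (hcard : 3 ≤ F.card)
    (hfaces : ∀ F' ⊂ F, JoinsCanonically F')
    (hirr : ∀ F' ⊂ F, F'.sup id < F.sup id)
    (hnotface : ¬ JoinsCanonically F) :
    ∃ j ∈ F, ∀ jstar : α, jstar ⋖ j →
      ¬ ∃ m : α, IsGreatest {a : α | jstar ≤ a ∧ ¬ j ≤ a} m := by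
  by_contra hcon
  push_neg at hcon
  apply hnotface
  set w := F.sup id with hw
  -- For each j in F, get its lower cover jstar and kappa m.
  constructor
  · exact ⟨rfl, hirr⟩
  intro B hB j hj
  obtain ⟨jstar, hcov, m, hm⟩ := hcon j hj
  have hjm : ¬ j ≤ m := hm.1.2
  have hjsm : jstar ≤ m := hm.1.1
  -- every other element of F is ≤ m
  have hz : (F.erase j).sup id ≤ m := by
    refine Finset.sup_le fun j' hj' => ?_
    have hj'F : j' ∈ F := Finset.mem_of_mem_erase hj'
    have hne : j ≠ j' := fun h => (Finset.mem_erase.1 hj').1 h.symm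
    have hpair : ({j, j'} : Finset α) ⊂ F := by
      refine Finset.ssubset_iff_subset_ne.2 ⟨?_, ?_⟩
      · intro x hx
        rcases Finset.mem_insert.1 hx with h | h
        · exact h ▸ hj
        · exact (Finset.mem_singleton.1 h) ▸ hj'F
      · intro h
        have hc : (({j, j'} : Finset α)).card = 2 := Finset.card_pair hne
        rw [h] at hc
        omega
    exact aux_pair (hfaces _ hpair) hne hcov hm
  -- jstar ⊔ rest < w
  have hjw : j ≤ w := by rw [hw]; exact Finset.le_sup (f := id) hj
  have hzw : (F.erase j).sup id ≤ w := by rw [hw]; exact Finset.sup_mono (Finset.erase_subset j F)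
  have hsplit : w = j ⊔ (F.erase j).sup id := by
    conv_lhs => rw [hw, ← Finset.insert_erase hj]
    rw [Finset.sup_insert]
    rfl
  have htm : jstar ⊔ (F.erase j).sup id ≤ m := sup_le hjsm hz
  have htlt : jstar ⊔ (F.erase j).sup id < w := by
    refine lt_of_le_of_ne (sup_le (hcov.le.trans hjw) hzw) fun h => ?_
    exact hjm (hjw.trans (h ▸ htm))
  -- choose a lower cover y of w above it
  obtain ⟨y, hty, hycov⟩ := exists_le_covBy_of_lt htlt
  -- the minimum gamma of {a | a ⊔ y = w}
  have hMne : (Finset.univ.filter (fun a : α => a ⊔ y = w)).Nonempty :=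
    ⟨w, Finset.mem_filter.2 ⟨Finset.mem_univ w, sup_eq_left.2 hycov.le⟩⟩
  set gamma := (Finset.univ.filter (fun a : α => a ⊔ y = w)).inf' hMne id with hgamma
  have hgw : gamma ⊔ y = w :=
    aux_inf_mem hjsd y w _ hMne (fun a ha => (Finset.mem_filter.1 ha).2)
  have hgmin : ∀ a : α, a ⊔ y = w → gamma ≤ a := by
    intro a ha
    have hmem : a ∈ Finset.univ.filter (fun a : α => a ⊔ y = w) :=
      Finset.mem_filter.2 ⟨Finset.mem_univ a, ha⟩
    exact Finset.inf'_le id hmem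
  -- j ⊔ y = w
  have hjy : j ⊔ y = w := by
    refine le_antisymm (sup_le hjw hycov.le) ?_
    calc w = j ⊔ (F.erase j).sup id := hsplit
    _ ≤ j ⊔ y := sup_le le_sup_left ((le_sup_right.trans hty).trans le_sup_right)
  have hgj : gamma ≤ j := hgmin j hjy
  -- gamma = j
  have hgeq : gamma = j := by
    rcases eq_or_lt_of_le hgj with h | h
    · exact h
    · exfalso
      have : gamma ≤ y := (aux_le_cov (hF j hj) hcov h).trans (le_sup_left.trans hty)
      have : w = y := by rw [← hgw, sup_eq_right.2 this]
      exact hycov.lt.ne this.symm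
  -- find b in B not below y
  have : ¬ B.sup id ≤ y := by
    intro h
    rw [hB.1] at h
    exact hycov.lt.not_ge h
  obtain ⟨b, hbB, hby⟩ : ∃ b ∈ B, ¬ b ≤ y := by
    by_contra h
    push_neg at h
    exact this (Finset.sup_le fun b hb => h b hb)
  have hbw : b ≤ w := by rw [hw, ← hB.1]; exact Finset.le_sup (f := id) hbB
  have hbyw : b ⊔ y = w := by
    rcases hycov.eq_or_eq (le_sup_right : y ≤ b ⊔ y) (sup_le hbw hycov.le) with h | h
    · exact absurd (le_sup_left.trans h.le) hby
    · exact h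
  exact ⟨b, hbB, hgeq ▸ hgmin b hbyw⟩
end

section
/- Let L be a finite join-semidistributive lattice and let j be a join-irreducible element of L such that K(j) has no greatest element. Let X denote the set of join-irreducible elements j' ≠ j such that {j, j'} is a face of the canonical join complex. Then: (1) ⋁X ∨ j = ⋁X ∨ j_*; and (2) there exists a nonempty antichain Y ∈ 𝒜_j such that ⋁Y ∨ j = ⋁Y ∨ j_*. -/
universe u v

/-!
If `K(j)` were closed under joins it would have a greatest element, so some `a, b ∈ K(j)` satisfy
`j ≤ a ⊔ b`, and `Y = {a, b}` witnesses (2).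

For (1), every `a' ∈ K(j)` satisfies `a' ≤ j ⊔ ⋁X`: the canonical join representation of
`j ⊔ a'` contains `j`, and its other joinands lie in `X`. If `j ≰ ⋁X ⊔ j_*`, pick `a` maximal in
`K(j)` above `⋁X ⊔ j_*`. For `a' ∈ K(j)`, `j ≤ a ⊔ a'` would give `a ⊔ a' = a ⊔ j`, and then
join-semidistributivity with `j ⊓ a' = j_*` would give `j ≤ a`; so `a ⊔ a' ∈ K(j)`, hence
`a' ≤ a`, and `a` would be the greatest element of `K(j)`.
-/

section JoinRepresentations

variable {α : Type*} [Lattice α] [OrderBot α] [DecidableEq α] {A B : Finset α} {w a : α}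

lemma IrredJoinRep.not_le (hA : IrredJoinRep A w) {b : α} (ha : a ∈ A) (hb : b ∈ A)
    (hab : a ≠ b) : ¬ a ≤ b := by
  intro hle
  have hsup : (A.erase a).sup id = w := by
    refine le_antisymm (hA.1 ▸ Finset.sup_mono (Finset.erase_subset a A)) (hA.1 ▸ ?_)
    refine Finset.sup_le fun x hx => ?_
    rcases eq_or_ne x a with rfl | hxa
    · exact hle.trans (Finset.le_sup (f := id) (Finset.mem_erase.2 ⟨hab.symm, hb⟩))
    · exact Finset.le_sup (f := id) (Finset.mem_erase.2 ⟨hxa, hx⟩)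
  exact (hA.2 _ (Finset.erase_ssubset ha)).ne hsup

lemma exists_subset_irredJoinRep (hB : B.sup id = w) : ∃ E ⊆ B, IrredJoinRep E w := by
  obtain ⟨E, hEB, hEmin⟩ := (B.powerset.filter (fun E => E.sup id = w)).exists_minimal
    ⟨B, Finset.mem_filter.2 ⟨Finset.mem_powerset_self B, hB⟩⟩
  obtain ⟨hEB, hEw⟩ := Finset.mem_filter.1 hEB
  refine ⟨E, Finset.mem_powerset.1 hEB, hEw, fun E' hE' => ?_⟩
  refine lt_of_le_of_ne (hEw ▸ Finset.sup_mono hE'.subset) fun hE'w => hE'.ne ?_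
  exact hE'.subset.antisymm (hEmin (Finset.mem_filter.2 ⟨Finset.mem_powerset.2
    (hE'.subset.trans (Finset.mem_powerset.1 hEB)), hE'w⟩) hE'.subset)

lemma CanonicalJoinRep.joinRefines (hA : CanonicalJoinRep A w) (hB : B.sup id = w) :
    JoinRefines A B := by
  obtain ⟨E, hEB, hE⟩ := exists_subset_irredJoinRep hB
  intro a ha
  obtain ⟨e, he, hae⟩ := hA.2 E hE a ha
  exact ⟨e, hEB he, hae⟩

lemma CanonicalJoinRep.exists_le_of_sup_union_erase (hA : CanonicalJoinRep A w) (ha : a ∈ A)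
    (hB : (B ∪ A.erase a).sup id = w) : ∃ b ∈ B, a ≤ b := by
  obtain ⟨d, hd, had⟩ := hA.joinRefines hB a ha
  rcases Finset.mem_union.1 hd with hdB | hdA
  · exact ⟨d, hdB, had⟩
  · obtain ⟨hda, hdA⟩ := Finset.mem_erase.1 hdA
    exact absurd had (hA.1.not_le ha hdA hda.symm)

lemma CanonicalJoinRep.joinIrred (hA : CanonicalJoinRep A w) (ha : a ∈ A) : JoinIrred a := by
  have hsup : a ⊔ (A.erase a).sup id = w := by
    conv_rhs => rw [← hA.1.1, ← Finset.insert_erase ha, Finset.sup_insert]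
    rfl
  refine ⟨fun hbot => ?_, fun x y hxy => ?_⟩
  · obtain ⟨b, hb, -⟩ := hA.exists_le_of_sup_union_erase (B := ∅) ha
      (by rw [Finset.empty_union, ← hsup, hbot, bot_sup_eq])
    exact absurd hb (Finset.notMem_empty b)
  · obtain ⟨b, hb, hab⟩ := hA.exists_le_of_sup_union_erase (B := {x, y}) ha
      (by rw [Finset.sup_union, ← hsup, hxy]; simp)
    rcases Finset.mem_insert.1 hb with rfl | hb
    · exact Or.inl (hab.antisymm (hxy ▸ le_sup_left))
    · rw [Finset.mem_singleton.1 hb] at hab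
      exact Or.inr (hab.antisymm (hxy ▸ le_sup_right))

lemma CanonicalJoinRep.joinsCanonically_of_subset (hA : CanonicalJoinRep A w) {A' : Finset α}
    (hA' : A' ⊆ A) : JoinsCanonically A' := by
  have hrefines : ∀ B : Finset α, B.sup id = A'.sup id → JoinRefines A' B := by
    intro B hB a ha
    refine hA.exists_le_of_sup_union_erase (hA' ha) (le_antisymm ?_ ?_)
    · rw [Finset.sup_union, hB, ← hA.1.1]
      exact sup_le (Finset.sup_mono hA') (Finset.sup_mono (Finset.erase_subset a A))
    · rw [Finset.sup_union, hB, ← hA.1.1, ← Finset.sup_union]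
      exact Finset.sup_mono fun x hx => by
        rcases eq_or_ne x a with rfl | hxa
        · exact Finset.mem_union_left _ ha
        · exact Finset.mem_union_right _ (Finset.mem_erase.2 ⟨hxa, hx⟩)
  refine ⟨⟨rfl, fun A'' hA'' => lt_of_le_of_ne (Finset.sup_mono hA''.subset) fun heq => ?_⟩,
    fun B hB => hrefines B hB.1⟩
  obtain ⟨a, haA', haA''⟩ := Finset.exists_of_ssubset hA''
  obtain ⟨b, hb, hab⟩ := hrefines A'' heq a haA'
  exact hA.1.not_le (hA' haA') (hA' (hA''.subset hb)) (fun h => haA'' (h ▸ hb)) hab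

end JoinRepresentations

section LowerCover

variable {α : Type*} [Lattice α] [OrderBot α] {j jstar x : α}

lemma JoinIrred.le_of_lt_of_covBy (hj : JoinIrred j) (hstar : jstar ⋖ j) (hx : x < j) :
    x ≤ jstar := by
  rcases hstar.eq_or_eq (le_sup_left : jstar ≤ jstar ⊔ x) (sup_le hstar.le hx.le) with h | h
  · exact le_sup_right.trans h.le
  · rcases hj.2 jstar x h.symm with h' | h'
    · exact absurd h' hstar.lt.ne'
    · exact absurd h' hx.ne'

lemma JoinIrred.inf_eq_of_covBy (hj : JoinIrred j) (hstar : jstar ⋖ j) (hx : jstar ≤ x)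
    (hjx : ¬ j ≤ x) : j ⊓ x = jstar :=
  le_antisymm (hj.le_of_lt_of_covBy hstar (lt_of_le_not_ge inf_le_left fun h => hjx
    (h.trans inf_le_right))) (le_inf hstar.le hx)

lemma JoinIrred.isAntichain_insert_pair (hj : JoinIrred j) (hstar : jstar ⋖ j) {a b : α}
    (ha : jstar ≤ a ∧ ¬ j ≤ a) (hb : jstar ≤ b ∧ ¬ j ≤ b) (hjab : j ≤ a ⊔ b) :
    IsAntichain (· ≤ ·) (insert j ({a, b} : Set α)) := by
  have hab : ¬ a ≤ b := fun h => hb.2 (hjab.trans (sup_le h le_rfl))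
  have hba : ¬ b ≤ a := fun h => ha.2 (hjab.trans (sup_le le_rfl h))
  have haj : ¬ a ≤ j := fun h =>
    hab ((hj.le_of_lt_of_covBy hstar (lt_of_le_not_ge h ha.2)).trans hb.1)
  have hbj : ¬ b ≤ j := fun h =>
    hba ((hj.le_of_lt_of_covBy hstar (lt_of_le_not_ge h hb.2)).trans ha.1)
  intro x hx y hy hxy
  simp only [Set.mem_insert_iff, Set.mem_singleton_iff] at hx hy
  rcases hx with rfl | rfl | rfl <;> rcases hy with rfl | rfl | rfl <;> first
    | exact absurd rfl hxy | assumption | exact ha.2 | exact hb.2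

end LowerCover

namespace JoinSemidistrib

variable {α : Type*} [Lattice α] [OrderBot α]

lemma sup_finsetSup_inf_eq (hsd : JoinSemidistrib α) {x u w : α} (V : Finset α)
    (hu : x ⊔ u = w) (hV : x ⊔ V.sup id = w) : x ⊔ V.sup (u ⊓ ·) = w := by
  classical
  induction V using Finset.induction_on generalizing x with
  | empty => simpa using hV
  | insert v V _ ih =>
    rw [Finset.sup_insert, id] at hV
    rw [Finset.sup_insert, ← sup_assoc]
    have hVw : V.sup id ≤ w := hV ▸ le_sup_right.trans le_sup_right
    have huv : x ⊔ V.sup id ⊔ (u ⊓ v) = w := by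
      have hyu : x ⊔ V.sup id ⊔ u = w := by rw [sup_right_comm, hu, sup_eq_left.2 hVw]
      have hyv : x ⊔ V.sup id ⊔ v = w := by rw [sup_assoc, sup_comm (V.sup id) v, hV]
      rw [hsd _ _ _ (hyu.trans hyv.symm), hyu]
    exact ih (by rw [sup_assoc, sup_eq_right.2 (inf_le_left : u ⊓ v ≤ u), hu])
      (by rw [sup_right_comm, huv])

lemma sup_image₂_inf_eq (hsd : JoinSemidistrib α) [DecidableEq α] {U V : Finset α} {w : α}
    (hU : U.sup id = w) (hV : V.sup id = w) : (Finset.image₂ (· ⊓ ·) U V).sup id = w := by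
  suffices h : ∀ (U : Finset α) (x : α), x ⊔ U.sup id = w →
      x ⊔ U.sup (fun u => V.sup (u ⊓ ·)) = w by
    rw [Finset.sup_image₂_left]
    simpa using h U ⊥ (by rw [bot_sup_eq, hU])
  intro U
  induction U using Finset.induction_on with
  | empty => exact fun x hx => by simpa using hx
  | insert u U _ ih =>
    intro x hx
    rw [Finset.sup_insert, id] at hx
    rw [Finset.sup_insert, ← sup_assoc]
    have hy : x ⊔ U.sup id ⊔ V.sup (u ⊓ ·) = w := by
      refine hsd.sup_finsetSup_inf_eq V ?_ ?_
      · rw [sup_assoc, sup_comm (U.sup id) u, hx]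
      · rw [hV, sup_eq_right]
        exact hx ▸ sup_le_sup_left le_sup_right x
    exact ih _ (by rw [sup_right_comm, hy])

lemma exists_joinRefines_forall (hsd : JoinSemidistrib α) [DecidableEq α] (w : α)
    (S : Finset (Finset α)) (hS : ∀ V ∈ S, V.sup id = w) :
    ∃ M : Finset α, M.sup id = w ∧ ∀ V ∈ S, JoinRefines M V := by
  induction S using Finset.induction_on with
  | empty => exact ⟨{w}, by simp, by simp⟩
  | insert V S _ ih =>
    obtain ⟨M, hMw, hMS⟩ := ih fun V' hV' => hS V' (Finset.mem_insert_of_mem hV')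
    refine ⟨Finset.image₂ (· ⊓ ·) M V,
      hsd.sup_image₂_inf_eq hMw (hS V (Finset.mem_insert_self V S)), ?_⟩
    intro V' hV' x hx
    obtain ⟨m, hm, v, hv, rfl⟩ := Finset.mem_image₂.1 hx
    rcases Finset.mem_insert.1 hV' with rfl | hV'
    · exact ⟨v, hv, inf_le_right⟩
    · obtain ⟨b, hb, hmb⟩ := hMS V' hV' m hm
      exact ⟨b, hb, inf_le_left.trans hmb⟩

lemma exists_canonicalJoinRep (hsd : JoinSemidistrib α) [Finite α] [DecidableEq α] (w : α) :
    ∃ A : Finset α, CanonicalJoinRep A w := by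
  have := Fintype.ofFinite α
  obtain ⟨M, hMw, hMS⟩ := hsd.exists_joinRefines_forall w
    (Finset.univ.filter fun V : Finset α => V.sup id = w) fun V hV => (Finset.mem_filter.1 hV).2
  obtain ⟨A, hAM, hA⟩ := exists_subset_irredJoinRep hMw
  exact ⟨A, hA, fun B hB a ha => hMS B (Finset.mem_filter.2 ⟨Finset.mem_univ B, hB.1⟩) a (hAM ha)⟩

lemma le_of_maximal_of_le_sup (hsd : JoinSemidistrib α) {j jstar a a' : α} (hj : JoinIrred j)
    (hstar : jstar ⋖ j) (ha : Maximal (fun x => jstar ≤ x ∧ ¬ j ≤ x) a)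
    (ha' : jstar ≤ a' ∧ ¬ j ≤ a') (hle : a' ≤ j ⊔ a) : a' ≤ a := by
  have hj_not : ¬ j ≤ a ⊔ a' := by
    intro hj'
    have hsup : a ⊔ j = a ⊔ a' :=
      le_antisymm (sup_le le_sup_left hj') (sup_le le_sup_left (hle.trans (sup_comm j a).le))
    have := hsd a j a' hsup
    rw [hj.inf_eq_of_covBy hstar ha'.1 ha'.2, sup_eq_left.2 ha.prop.1] at this
    exact ha.prop.2 (this ▸ le_sup_right)
  exact le_sup_right.trans (ha.2 ⟨ha.prop.1.trans le_sup_left, hj_not⟩ le_sup_left)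

lemma le_sup_finsetSup_of_joinsCanonically (hsd : JoinSemidistrib α) [Finite α] [DecidableEq α]
    {j jstar a : α} (hj : JoinIrred j) (hstar : jstar ⋖ j) (X : Finset α)
    (hX : ∀ j', JoinIrred j' → j' ≠ j → JoinsCanonically ({j, j'} : Finset α) → j' ∈ X)
    (ha : jstar ≤ a) (hja : ¬ j ≤ a) : a ≤ j ⊔ X.sup id := by
  obtain ⟨A, hA⟩ := hsd.exists_canonicalJoinRep (j ⊔ a)
  have hjA : j ∈ A := by
    obtain ⟨e, heA, hea⟩ : ∃ e ∈ A, ¬ e ≤ a := by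
      by_contra! h
      exact hja (le_sup_left.trans (hA.1.1 ▸ Finset.sup_le h))
    obtain ⟨b, hb, heb⟩ := hA.joinRefines (B := {j, a}) (by simp) e heA
    rcases Finset.mem_insert.1 hb with rfl | hb
    · obtain rfl : e = b := by_contra fun hne =>
        hea ((hj.le_of_lt_of_covBy hstar (heb.lt_of_ne hne)).trans ha)
      exact heA
    · exact absurd (Finset.mem_singleton.1 hb ▸ heb) hea
  calc a ≤ A.sup id := hA.1.1 ▸ le_sup_right
    _ ≤ j ⊔ X.sup id := Finset.sup_le fun b hb => by
      rcases eq_or_ne b j with rfl | hbj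
      · exact le_sup_left
      · refine le_sup_of_le_right (Finset.le_sup (f := id) (hX b (hA.joinIrred hb) hbj ?_))
        exact hA.joinsCanonically_of_subset (Finset.insert_subset hjA (by simpa using hb))

lemma le_finsetSup_sup_of_not_isGreatest (hsd : JoinSemidistrib α) [Finite α] [DecidableEq α]
    {j jstar : α} (hj : JoinIrred j) (hstar : jstar ⋖ j)
    (hk : ¬ ∃ m : α, IsGreatest {a : α | jstar ≤ a ∧ ¬ j ≤ a} m) (X : Finset α)
    (hX : ∀ j', JoinIrred j' → j' ≠ j → JoinsCanonically ({j, j'} : Finset α) → j' ∈ X) :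
    j ≤ X.sup id ⊔ jstar := by
  by_contra hjX
  obtain ⟨a, hXa, ha⟩ := Finite.exists_le_maximal
    (p := fun x => jstar ≤ x ∧ ¬ j ≤ x) ⟨le_sup_right, hjX⟩
  refine hk ⟨a, ha.prop, fun a' ha' => hsd.le_of_maximal_of_le_sup hj hstar ha ha' ?_⟩
  exact (hsd.le_sup_finsetSup_of_joinsCanonically hj hstar X hX ha'.1 ha'.2).trans
    (sup_le_sup_left (le_sup_left.trans hXa) j)

end JoinSemidistrib

lemma SupClosed.exists_isGreatest {α : Type*} [SemilatticeSup α] [Finite α] {s : Set α}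
    (hs : SupClosed s) (hne : s.Nonempty) : ∃ m, IsGreatest s m := by
  obtain ⟨m, -, hm⟩ := Finite.exists_le_maximal (p := (· ∈ s)) hne.some_mem
  exact ⟨m, hm.prop, fun b hb => le_sup_right.trans (hm.2 (hs hm.prop hb) le_sup_left)⟩

lemma exists_le_sup_of_not_isGreatest {α : Type*} [SemilatticeSup α] [Finite α] {j jstar : α}
    (hjs : ¬ j ≤ jstar) (hk : ¬ ∃ m : α, IsGreatest {a : α | jstar ≤ a ∧ ¬ j ≤ a} m) :
    ∃ a b, (jstar ≤ a ∧ ¬ j ≤ a) ∧ (jstar ≤ b ∧ ¬ j ≤ b) ∧ j ≤ a ⊔ b := by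
  by_contra! h
  exact hk (SupClosed.exists_isGreatest (fun a ha b hb => ⟨ha.1.trans le_sup_left, h a b ha hb⟩)
    ⟨jstar, le_rfl, hjs⟩)

/-- Lemma (kappa): if `κ(j)` does not exist and `X` is the set of join-irreducibles `j' ≠ j`
with `{j, j'}` a face, then `⋁X ⊔ j = ⋁X ⊔ j_*`, and there is a nonempty antichain `Y ∈ 𝒜_j`
with `⋁Y ⊔ j = ⋁Y ⊔ j_*`. -/
theorem stmt_11 {α : Type*} [Lattice α] [OrderBot α] [Fintype α] [DecidableEq α]
    (hjsd : JoinSemidistrib α) (j jstar : α) (hj : JoinIrred j) (hstar : jstar ⋖ j)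
    (hk : ¬ ∃ m : α, IsGreatest {a : α | jstar ≤ a ∧ ¬ j ≤ a} m)
    (X : Finset α)
    (hX : ∀ j' : α, j' ∈ X ↔
      JoinIrred j' ∧ j' ≠ j ∧ JoinsCanonically ({j, j'} : Finset α)) :
    (X.sup id ⊔ j = X.sup id ⊔ jstar) ∧
    ∃ Y : Finset α, Y.Nonempty ∧ j ∉ Y ∧
      IsAntichain (· ≤ ·) (↑Y : Set α) ∧
      IsAntichain (· ≤ ·) (insert j (↑Y : Set α)) ∧
      Y.sup id ⊔ j = Y.sup id ⊔ jstar := by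
  refine ⟨le_antisymm ?_ (sup_le_sup_left hstar.le _), ?_⟩
  · exact sup_le le_sup_left (hjsd.le_finsetSup_sup_of_not_isGreatest hj hstar hk X
      fun j' hj' hne hface => (hX j').2 ⟨hj', hne, hface⟩)
  obtain ⟨a, b, ha, hb, hjab⟩ := exists_le_sup_of_not_isGreatest (not_le_of_gt hstar.lt) hk
  have hY := hj.isAntichain_insert_pair hstar ha hb hjab
  refine ⟨{a, b}, Finset.insert_nonempty a {b}, ?_, ?_, ?_, ?_⟩
  · simp only [Finset.mem_insert, Finset.mem_singleton]
    rintro (rfl | rfl)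
    exacts [ha.2 le_rfl, hb.2 le_rfl]
  · simpa using hY.subset (Set.subset_insert j _)
  · simpa using hY
  · have hjs : jstar ≤ a ⊔ b := ha.1.trans le_sup_left
    simp [sup_eq_left.2 hjab, sup_eq_left.2 hjs]
end

section
/- Let L be a finite join-semidistributive lattice and let j be a join-irreducible element of L such that K(j) has no greatest element. Let X be the set of join-irreducible elements j' ≠ j such that {j, j'} is a face of the canonical join complex. Let A be a nonempty antichain contained in X with ⋁A ∨ j = ⋁A ∨ j_* that is minimal in join-refinement among all antichains Y ⊆ X with ⋁Y ∨ j = ⋁Y ∨ j_*. Then every two-element subset of A is a face of the canonical join complex of L. -/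
universe u v

/-!
The whole antichain `A` joins canonically, and faces of the canonical join complex are closed
under taking subsets. To see that `A` is a face, consider the elements `w` with
`j ≤ j_* ⊔ w` whose canonical joinands all lie below elements of `A`, starting from
`w = ⋁ A`. If some canonical joinand `d` of `w` satisfies `d ≤ d_* ⊔ j`, then
join-semidistributivity shows that replacing `d` by `d_*` gives a smaller such `w`. Otherwise
every canonical joinand `d` of `w` makes `{j, d}` a face, so the canonical join representation
of `w` competes with `A` in the minimality of `A` and therefore equals `A`.
-/

open Finset

section Lattice

variable {α : Type*} [Lattice α] {S V : Finset α} {w s : α}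

lemma JoinRefines.trans {T : Finset α} (hST : JoinRefines S T) (hTV : JoinRefines T V) :
    JoinRefines S V := fun s hs =>
  let ⟨t, ht, hst⟩ := hST s hs
  let ⟨v, hv, htv⟩ := hTV t ht
  ⟨v, hv, hst.trans htv⟩

variable [OrderBot α]

lemma CanonicalJoinRep.joinsCanonically (h : CanonicalJoinRep S w) : JoinsCanonically S := by
  rwa [JoinsCanonically, h.1.1]

variable [DecidableEq α]

lemma sup_id_eq_sup_sup_erase (hs : s ∈ S) : S.sup id = s ⊔ (S.erase s).sup id := by
  conv_lhs => rw [← insert_erase hs]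
  exact sup_insert

lemma exists_irredJoinRep_subset (hV : V.sup id = w) : ∃ R ⊆ V, IrredJoinRep R w := by
  obtain ⟨R, hR⟩ :=
    Finset.exists_minimal (s := V.powerset.filter (·.sup id = w)) ⟨V, by simp [hV]⟩
  simp only [mem_filter, mem_powerset] at hR
  refine ⟨R, hR.1.1, hR.1.2, fun R' hR' => ?_⟩
  refine (hR.1.2 ▸ sup_mono hR'.subset).lt_of_ne fun h => ?_
  exact hR'.2 (hR.2 ⟨hR'.subset.trans hR.1.1, h⟩ hR'.subset)

lemma IrredJoinRep.isAntichain (h : IrredJoinRep S w) : IsAntichain (· ≤ ·) (S : Set α) := by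
  intro s hs s' hs' hne hle
  refine (h.2 _ (erase_ssubset hs)).ne (le_antisymm (h.1 ▸ sup_mono (erase_subset s S)) ?_)
  rw [← h.1, sup_id_eq_sup_sup_erase hs]
  exact sup_le (hle.trans (le_sup (f := id) (mem_erase.2 ⟨hne.symm, hs'⟩))) le_rfl

lemma CanonicalJoinRep.joinRefines_s14 (h : CanonicalJoinRep S w) (hV : V.sup id = w) :
    JoinRefines S V := by
  obtain ⟨R, hRV, hR⟩ := exists_irredJoinRep_subset hV
  intro s hs
  obtain ⟨r, hr, hsr⟩ := h.2 R hR s hs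
  exact ⟨r, hRV hr, hsr⟩

lemma CanonicalJoinRep.joinIrred_s14 (h : CanonicalJoinRep S w) (hs : s ∈ S) : JoinIrred s := by
  refine ⟨fun hbot => (h.1.2 _ (erase_ssubset hs)).ne ?_, fun a b hab => ?_⟩
  · rw [hbot, sup_erase_bot, h.1.1]
  by_contra! hne
  have hV : (insert a (insert b (S.erase s))).sup id = w := by
    rw [← h.1.1, sup_id_eq_sup_sup_erase hs, hab]
    simp [sup_assoc]
  obtain ⟨v, hv, hsv⟩ := h.joinRefines_s14 hV s hs
  rcases mem_insert.1 hv with rfl | hv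
  · exact hne.1 (le_antisymm (hab ▸ le_sup_left) hsv).symm
  rcases mem_insert.1 hv with rfl | hv
  · exact hne.2 (le_antisymm (hab ▸ le_sup_right) hsv).symm
  · exact (mem_erase.1 hv).1 (h.1.isAntichain.eq hs (mem_erase.1 hv).2 hsv).symm

lemma JoinsCanonically.subset {T : Finset α} (hS : JoinsCanonically S) (hTS : T ⊆ S) :
    JoinsCanonically T := by
  have hS_eq : S.sup id = T.sup id ⊔ (S \ T).sup id := by
    rw [← sup_union, union_sdiff_of_subset hTS]
  refine ⟨⟨rfl, fun T' hT' => (sup_mono hT'.subset).lt_of_ne fun h => ?_⟩, fun V hV t ht => ?_⟩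
  · obtain ⟨t, htT, htT'⟩ := exists_of_ssubset hT'
    have hss : T' ∪ (S \ T) ⊂ S := by
      refine (ssubset_iff_of_subset (union_subset (hT'.subset.trans hTS) sdiff_subset)).2 ?_
      exact ⟨t, hTS htT, by simp [htT, htT']⟩
    exact (hS.1.2 _ hss).ne (by rw [sup_union, h, ← hS_eq])
  · obtain ⟨r, hr, htr⟩ :=
      hS.joinRefines_s14 (V := V ∪ (S \ T)) (by rw [sup_union, hV.1, ← hS_eq]) t (hTS ht)
    rcases mem_union.1 hr with hr | hr
    · exact ⟨r, hr, htr⟩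
    · obtain ⟨hrS, hrT⟩ := mem_sdiff.1 hr
      exact absurd (hS.1.isAntichain.eq (hTS ht) hrS htr ▸ ht) hrT

lemma JoinsCanonically.not_le_sup_of_pair {j j' a : α}
    (h : JoinsCanonically ({j, a} : Finset α)) (hne : j ≠ a) (hj' : j' < j) :
    ¬ j ≤ j' ⊔ a := by
  intro hle
  have hsup : ({j', a} : Finset α).sup id = ({j, a} : Finset α).sup id := by
    simpa using le_antisymm (sup_le (hj'.le.trans le_sup_left) le_sup_right)
      (sup_le hle le_sup_right)
  obtain ⟨b, hb, hjb⟩ := h.joinRefines_s14 hsup j (mem_insert_self j {a})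
  obtain rfl | rfl : b = j' ∨ b = a := by simpa using hb
  · exact hj'.not_ge hjb
  · exact hne (h.1.isAntichain.eq (by simp) (by simp) hjb)

lemma CanonicalJoinRep.sup_sup_erase_lt {d d' : α} (h : CanonicalJoinRep S w) (hd : d ∈ S)
    (hd' : d' < d) : d' ⊔ (S.erase d).sup id < w := by
  have hdw : d ≤ w := h.1.1 ▸ le_sup (f := id) hd
  refine (sup_le (hd'.le.trans hdw) (h.1.1 ▸ sup_mono (erase_subset d S))).lt_of_ne fun hw => ?_
  obtain ⟨v, hv, hdv⟩ :=
    h.joinRefines_s14 (V := insert d' (S.erase d)) (by rw [sup_insert, ← hw]; rfl) d hd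
  rcases mem_insert.1 hv with rfl | hv
  · exact hd'.not_ge hdv
  · exact (mem_erase.1 hv).1 (h.1.isAntichain.eq hd (mem_erase.1 hv).2 hdv).symm

lemma CanonicalJoinRep.mem_of_not_le_sup {C : Finset α} {j j' d : α}
    (hC : CanonicalJoinRep C (j ⊔ d)) (hj : ∀ x < j, x ≤ j') (hjd : ¬ j ≤ j' ⊔ d) : j ∈ C := by
  by_contra hjC
  refine hjd (le_sup_left.trans (hC.1.1 ▸ Finset.sup_le fun c hc => ?_))
  obtain ⟨b, hb, hcb⟩ := hC.joinRefines_s14 (V := {j, d}) (by simp) c hc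
  obtain rfl | rfl : b = j ∨ b = d := by simpa using hb
  · exact (hj c (hcb.lt_of_ne fun h => hjC (h ▸ hc))).trans le_sup_left
  · exact hcb.trans le_sup_right

end Lattice

lemma JoinIrred.le_of_lt_of_covBy_s14 {α : Type*} [Lattice α] [OrderBot α] {j j' x : α}
    (hj : JoinIrred j) (hj' : j' ⋖ j) (hx : x < j) : x ≤ j' := by
  rcases hj'.eq_or_eq le_sup_right (sup_le hx.le hj'.le) with h | h
  · exact h ▸ le_sup_left
  · exact ((hj.2 x j' h.symm).elim hx.ne' hj'.lt.ne').elim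

lemma JoinIrred.exists_covBy {α : Type*} [Lattice α] [OrderBot α] [Finite α] {j : α}
    (hj : JoinIrred j) : ∃ j', j' ⋖ j ∧ ∀ x < j, x ≤ j' := by
  obtain ⟨j', -, hj'⟩ := exists_le_covBy_of_lt (bot_lt_iff_ne_bot.2 hj.1)
  exact ⟨j', hj', fun x hx => hj.le_of_lt_of_covBy_s14 hj' hx⟩

lemma JoinSemidistrib.le_sup_of_le_sup_sup {α : Type*} [Lattice α] (hjsd : JoinSemidistrib α)
    {j j' d y : α} (hj : ∀ x < j, x ≤ j') (hjd : ¬ j ≤ d) (hd : d ≤ y ⊔ j)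
    (h : j ≤ j' ⊔ y ⊔ d) : j ≤ j' ⊔ y := by
  set x := j' ⊔ y
  have hxj : x ⊔ j = x ⊔ d :=
    le_antisymm (sup_le le_sup_left h)
      (sup_le le_sup_left (hd.trans (sup_le_sup_right le_sup_right j)))
  have hmeet : j ⊓ d ≤ j' := hj _ (inf_le_left.lt_of_ne fun h => hjd (inf_eq_left.1 h))
  calc j ≤ x ⊔ j := le_sup_right
    _ = x ⊔ (j ⊓ d) := (hjsd x j d hxj).symm
    _ = x := sup_eq_left.2 (hmeet.trans le_sup_left)

lemma JoinSemidistrib.le_sup_sup_sup_erase {α : Type*} [Lattice α] [OrderBot α] [DecidableEq α]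
    (hjsd : JoinSemidistrib α) {S : Finset α} {w j j' d d' : α} (hS : S.sup id = w) (hd : d ∈ S)
    (hd' : d' ≤ d) (hj : ∀ x < j, x ≤ j') (hjd : ¬ j ≤ d) (hdj : d ≤ d' ⊔ j)
    (hjw : j ≤ j' ⊔ w) : j ≤ j' ⊔ (d' ⊔ (S.erase d).sup id) := by
  have hw : d' ⊔ (S.erase d).sup id ⊔ d = w := by
    rw [sup_right_comm, sup_eq_right.2 hd', ← sup_id_eq_sup_sup_erase hd, hS]
  refine hjsd.le_sup_of_le_sup_sup hj hjd (hdj.trans (sup_le_sup_right le_sup_left j)) ?_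
  rwa [sup_assoc, hw]

section Finite

variable {α : Type*} [Lattice α] [Fintype α] {w : α}

lemma JoinSemidistrib.exists_isLeast_sup_eq [DecidableEq α] (hjsd : JoinSemidistrib α) {m : α}
    (hmw : m ≤ w) :
    ∃ c, IsLeast {x | x ⊔ m = w} c := by
  obtain ⟨c, hc⟩ := Finset.exists_minimal (s := univ.filter (· ⊔ m = w)) ⟨w, by simp [hmw]⟩
  simp only [mem_filter, mem_univ, true_and] at hc
  refine ⟨c, hc.1, fun x hx => ?_⟩
  have hcx : c ⊓ x ⊔ m = w := by
    rw [sup_comm, hjsd m c x (by rw [sup_comm, hc.1, sup_comm, hx]), sup_comm, hc.1]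
  exact (hc.2 hcx inf_le_left).trans inf_le_right

open scoped Classical in
noncomputable def lowerCoverJoinands (w : α) : Finset α :=
  univ.filter fun c => ∃ m, m ⋖ w ∧ IsLeast {x | x ⊔ m = w} c

lemma mem_lowerCoverJoinands {c : α} :
    c ∈ lowerCoverJoinands w ↔ ∃ m, m ⋖ w ∧ IsLeast {x | x ⊔ m = w} c := by
  simp [lowerCoverJoinands]

variable [OrderBot α]

lemma lowerCoverJoinands_joinRefines {V : Finset α} (hV : V.sup id = w) :
    JoinRefines (lowerCoverJoinands w) V := by
  intro c hc
  obtain ⟨m, hm, hc⟩ := mem_lowerCoverJoinands.1 hc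
  obtain ⟨v, hv, hvm⟩ : ∃ v ∈ V, ¬ v ≤ m := by
    by_contra! h
    exact hm.lt.not_ge (hV ▸ Finset.sup_le h)
  have hvw : v ⊔ m = w :=
    (hm.eq_or_eq le_sup_right (sup_le (hV ▸ le_sup (f := id) hv) hm.le)).resolve_left
      fun h => hvm (h ▸ le_sup_left)
  exact ⟨v, hv, hc.2 hvw⟩

variable [DecidableEq α]

lemma JoinSemidistrib.sup_lowerCoverJoinands (hjsd : JoinSemidistrib α) (w : α) :
    (lowerCoverJoinands w).sup id = w := by
  refine (Finset.sup_le fun c hc => ?_).eq_of_not_lt fun hlt => ?_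
  · obtain ⟨m, -, hc⟩ := mem_lowerCoverJoinands.1 hc
    exact hc.1 ▸ le_sup_left
  · obtain ⟨m, hle, hm⟩ := exists_le_covBy_of_lt hlt
    obtain ⟨c, hc⟩ := hjsd.exists_isLeast_sup_eq hm.le
    have hcm : c ≤ m := (le_sup (f := id) (mem_lowerCoverJoinands.2 ⟨m, hm, hc⟩)).trans hle
    exact hm.lt.ne (sup_eq_right.2 hcm ▸ hc.1)

theorem JoinSemidistrib.exists_canonicalJoinRep_s14 (hjsd : JoinSemidistrib α) (w : α) :
    ∃ S, CanonicalJoinRep S w := by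
  obtain ⟨S, hS, hirr⟩ := exists_irredJoinRep_subset (hjsd.sup_lowerCoverJoinands w)
  exact ⟨S, hirr, fun V hV s hs => lowerCoverJoinands_joinRefines hV.1 s (hS hs)⟩

lemma JoinSemidistrib.joinsCanonically_pair (hjsd : JoinSemidistrib α) {j j' d d' : α}
    (hj : ∀ x < j, x ≤ j') (hd : ∀ x < d, x ≤ d') (hjd : ¬ j ≤ j' ⊔ d) (hdj : ¬ d ≤ d' ⊔ j) :
    JoinsCanonically ({j, d} : Finset α) := by
  obtain ⟨C, hC⟩ := hjsd.exists_canonicalJoinRep_s14 (j ⊔ d)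
  have hjC : j ∈ C := hC.mem_of_not_le_sup hj hjd
  have hdC : d ∈ C := (sup_comm j d ▸ hC).mem_of_not_le_sup hd hdj
  suffices C = {j, d} from this ▸ hC.joinsCanonically
  refine Subset.antisymm (fun c hc => ?_) (insert_subset hjC (singleton_subset_iff.2 hdC))
  obtain ⟨b, hb, hcb⟩ := hC.joinRefines_s14 (V := {j, d}) (by simp) c hc
  have hbC : b ∈ C := by
    obtain rfl | rfl : b = j ∨ b = d := by simpa using hb
    exacts [hjC, hdC]
  exact hC.1.isAntichain.eq hc hbC hcb ▸ hb

end Finite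

theorem joinsCanonically_of_minimal {α : Type*} [Lattice α] [OrderBot α] [Fintype α]
    [DecidableEq α] (hjsd : JoinSemidistrib α) {j jstar : α} (hj : JoinIrred j)
    (hstar : jstar ⋖ j) {X : Set α}
    (hX : ∀ j' : α, j' ∈ X ↔
      JoinIrred j' ∧ j' ≠ j ∧ JoinsCanonically ({j, j'} : Finset α))
    {A : Finset α} (hAX : ↑A ⊆ X)
    (hAmin : ∀ Y : Finset α, ↑Y ⊆ X → IsAntichain (· ≤ ·) (↑Y : Set α) →
      Y.sup id ⊔ j = Y.sup id ⊔ jstar → JoinRefines Y A → Y = A)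
    (w : α) (B : Finset α) (hB : B.sup id = w) (hjw : j ≤ jstar ⊔ w) (hBA : JoinRefines B A) :
    JoinsCanonically A := by
  induction w using WellFoundedLT.induction generalizing B with
  | _ w ih =>
  obtain ⟨S, hS⟩ := hjsd.exists_canonicalJoinRep_s14 w
  have hSA : JoinRefines S A := (hS.joinRefines_s14 hB).trans hBA
  have hjlow : ∀ x < j, x ≤ jstar := fun x hx => hj.le_of_lt_of_covBy_s14 hstar hx
  have hjS : ∀ d ∈ S, ¬ j ≤ jstar ⊔ d := by
    intro d hd h
    obtain ⟨a, ha, hda⟩ := hSA d hd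
    obtain ⟨-, hne, hja⟩ := (hX a).1 (hAX ha)
    exact hja.not_le_sup_of_pair hne.symm hstar.lt (h.trans (sup_le_sup_left hda _))
  by_cases hdesc : ∃ d ∈ S, ∃ d', d' ⋖ d ∧ d ≤ d' ⊔ j
  · obtain ⟨d, hdS, d', hd', hdj⟩ := hdesc
    refine ih _ (hS.sup_sup_erase_lt hdS hd'.lt) (insert d' (S.erase d)) sup_insert
      (hjsd.le_sup_sup_sup_erase hS.1.1 hdS hd'.le hjlow
        (fun h => hjS d hdS (h.trans le_sup_right)) hdj hjw) fun b hb => ?_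
    rcases mem_insert.1 hb with rfl | hb
    · obtain ⟨a, ha, hda⟩ := hSA d hdS
      exact ⟨a, ha, hd'.le.trans hda⟩
    · exact hSA b (mem_of_mem_erase hb)
  · push Not at hdesc
    have hSX : ↑S ⊆ X := by
      intro d hd
      obtain ⟨d', hd', hdlow⟩ := (hS.joinIrred_s14 hd).exists_covBy
      refine (hX d).2 ⟨hS.joinIrred_s14 hd, fun h => hjS d hd (h ▸ le_sup_right), ?_⟩
      exact hjsd.joinsCanonically_pair hjlow hdlow (hjS d hd) (hdesc d hd d' hd')
    have hSeq : S.sup id ⊔ j = S.sup id ⊔ jstar := by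
      rw [hS.1.1]
      exact le_antisymm (sup_le le_sup_left (hjw.trans_eq (sup_comm _ _)))
        (sup_le_sup_left hstar.le w)
    exact hAmin S hSX hS.1.isAntichain hSeq hSA ▸ hS.joinsCanonically

theorem stmt_14_general {α : Type*} [Lattice α] [OrderBot α] [Fintype α] [DecidableEq α]
    (hjsd : JoinSemidistrib α) (j jstar : α) (hj : JoinIrred j) (hstar : jstar ⋖ j)
    (X : Set α)
    (hX : ∀ j' : α, j' ∈ X ↔
      JoinIrred j' ∧ j' ≠ j ∧ JoinsCanonically ({j, j'} : Finset α))
    (A : Finset α) (hAX : ↑A ⊆ X)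
    (hAeq : A.sup id ⊔ j = A.sup id ⊔ jstar)
    (hAmin : ∀ Y : Finset α, ↑Y ⊆ X → IsAntichain (· ≤ ·) (↑Y : Set α) →
      Y.sup id ⊔ j = Y.sup id ⊔ jstar → JoinRefines Y A → Y = A) :
    ∀ a ∈ A, ∀ a' ∈ A, a ≠ a' → JoinsCanonically ({a, a'} : Finset α) := by
  intro a ha a' ha' _
  have hjA : j ≤ jstar ⊔ A.sup id := le_sup_right.trans (hAeq.trans (sup_comm _ _)).le
  have hA : JoinsCanonically A :=
    joinsCanonically_of_minimal hjsd hj hstar hX hAX hAmin (A.sup id) A rfl hjA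
      fun a ha => ⟨a, ha, le_rfl⟩
  exact hA.subset (insert_subset ha (singleton_subset_iff.2 ha'))

/-- Lemma (edges): with `A` as in the previous lemma, every two-element subset of `A` is a
face of the canonical join complex. -/
theorem stmt_14 {α : Type*} [Lattice α] [OrderBot α] [Fintype α] [DecidableEq α]
    (hjsd : JoinSemidistrib α) (j jstar : α) (hj : JoinIrred j) (hstar : jstar ⋖ j)
    (hk : ¬ ∃ m : α, IsGreatest {a : α | jstar ≤ a ∧ ¬ j ≤ a} m)
    (X : Set α)
    (hX : ∀ j' : α, j' ∈ X ↔
      JoinIrred j' ∧ j' ≠ j ∧ JoinsCanonically ({j, j'} : Finset α))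
    (A : Finset α) (hAne : A.Nonempty) (hAX : ↑A ⊆ X)
    (hAanti : IsAntichain (· ≤ ·) (↑A : Set α))
    (hAeq : A.sup id ⊔ j = A.sup id ⊔ jstar)
    (hAmin : ∀ Y : Finset α, ↑Y ⊆ X → IsAntichain (· ≤ ·) (↑Y : Set α) →
      Y.sup id ⊔ j = Y.sup id ⊔ jstar → JoinRefines Y A → Y = A) :
    ∀ a ∈ A, ∀ a' ∈ A, a ≠ a' → JoinsCanonically ({a, a'} : Finset α) :=
  stmt_14_general hjsd j jstar hj hstar X hX A hAX hAeq hAmin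
end
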